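/- arXiv:1502.04068 — 10 statements merged into one kernel-verified Lean document; each statement's English description precedes it below -/
import Mathlib

section
/- For every number of stacks ℓ ≥ 1 and every odd number of tokens n, the second player wins Building Nim BN(n,ℓ); formally, ¬ BNwins (fun _ : Fin ℓ => 0) n whenever n is odd. -/
instance : Std.Commutative (fun x y : ℕ => x ^^^ y) := ⟨Nat.xor_comm⟩
instance : Std.Associative (fun x y : ℕ => x ^^^ y) := ⟨Nat.xor_assoc⟩

/-- `BNwins s r` holds iff the player to move wins Building Nim from position `s`
(the stack heights) with `r` tokens remaining to be placed. When no tokens remain,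
Nim play starts, and by Bouton's theorem the player to move wins iff the
Nim-sum (bitwise XOR) of the stack heights is nonzero. -/
def BNwins {ℓ : ℕ} : (Fin ℓ → ℕ) → ℕ → Prop
  | s, 0 => Finset.univ.fold (fun x y : ℕ => x ^^^ y) 0 s ≠ 0
  | s, r + 1 => ∃ i : Fin ℓ, ¬ BNwins (Function.update s i (s i + 1)) r

/-!
The parity of a Nim-sum is the parity of the plain sum. If the tokens already placed plus
those still to come are odd in number, the final position has odd total height, hence a
nonzero Nim-sum, so whoever moves first in the Nim phase wins whatever the placements were.
The Building phase is then a pure parity race: the player to move wins iff an even number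
of tokens remains. From the empty position with `n` odd this total is `n` itself.
-/

lemma Finset.fold_xor_mod_two {ι : Type*} [DecidableEq ι] (t : Finset ι) (s : ι → ℕ) :
    t.fold (fun x y : ℕ => x ^^^ y) 0 s % 2 = (∑ i ∈ t, s i) % 2 := by
  induction t using Finset.induction with
  | empty => simp
  | insert a t ha ih =>
    rw [Finset.fold_insert ha, Finset.sum_insert ha, Nat.xor_mod_two_eq, Nat.add_mod, ih,
      ← Nat.add_mod]

lemma Finset.sum_update_add {ι M : Type*} [Fintype ι] [DecidableEq ι] [AddCommMonoid M]
    (s : ι → M) (i : ι) (a : M) :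
    ∑ j, Function.update s i (s i + a) j = ∑ j, s j + a := by
  rw [Finset.sum_update_of_mem (Finset.mem_univ i), Finset.sdiff_singleton_eq_erase,
    add_right_comm, Finset.add_sum_erase _ _ (Finset.mem_univ i)]

theorem BNwins_iff_even_of_odd_total {ℓ : ℕ} (r : ℕ) (s : Fin ℓ → ℕ)
    (hodd : Odd (∑ i, s i + r)) :
    BNwins s r ↔ Even r := by
  induction r generalizing s with
  | zero =>
    have hsum : (Finset.univ.fold (fun x y : ℕ => x ^^^ y) 0 s) % 2 = 1 := by
      rw [Finset.fold_xor_mod_two, ← Nat.odd_iff]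
      simpa using hodd
    simp only [BNwins, Even.zero, iff_true]
    omega
  | succ r ih =>
    have hmove : ∀ i, BNwins (Function.update s i (s i + 1)) r ↔ Even r := fun i =>
      ih _ (by rwa [Finset.sum_update_add, add_right_comm, add_assoc])
    simp only [BNwins, hmove, exists_const_iff, Nat.even_add_one, and_iff_right_iff_imp]
    -- With an even number of tokens to come, the total height is odd, so some stack exists.
    intro hr
    have hsum : ∑ i, s i ≠ 0 := by
      rintro h
      rw [h, zero_add, Nat.odd_add_one] at hodd
      exact hodd (Nat.not_even_iff_odd.mp hr)
    obtain ⟨i, -, -⟩ := Finset.exists_ne_zero_of_sum_ne_zero hsum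
    exact ⟨i⟩

theorem second_player_wins_of_odd_general (ℓ n : ℕ) (hn : Odd n) :
    ¬ BNwins (fun _ : Fin ℓ => 0) n := by
  rw [BNwins_iff_even_of_odd_total n _ (by simpa using hn), Nat.not_even_iff_odd]
  exact hn

/-- If the number of tokens `n` is odd, the second player wins `BN(n, ℓ)`. -/
theorem second_player_wins_of_odd (ℓ n : ℕ) (hℓ : 1 ≤ ℓ) (hn : Odd n) :
    ¬ BNwins (fun _ : Fin ℓ => 0) n :=
  second_player_wins_of_odd_general ℓ n hn
end

section
/- If both the number of tokens n and the number of stacks ℓ are even (with ℓ ≥ 2), then the second player wins Building Nim BN(n,ℓ); formally, ¬ BNwins (fun _ : Fin ℓ => 0) n whenever n and ℓ are even. -/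
/-- The pairing involution on `Fin ℓ` (for even `ℓ`): swaps `2k ↔ 2k+1`. -/
def sw {ℓ : ℕ} (hℓ : ℓ % 2 = 0) (i : Fin ℓ) : Fin ℓ :=
  ⟨if i.val % 2 = 0 then i.val + 1 else i.val - 1, by have := i.2; split <;> omega⟩

lemma sw_sw {ℓ : ℕ} (hℓ : ℓ % 2 = 0) (i : Fin ℓ) : sw hℓ (sw hℓ i) = i := by
  have := i.2
  apply Fin.ext
  simp only [sw]
  split_ifs <;> omega

lemma sw_ne {ℓ : ℕ} (hℓ : ℓ % 2 = 0) (i : Fin ℓ) : sw hℓ i ≠ i := by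
  intro hc
  have := congrArg Fin.val hc
  have h2 := i.2
  simp only [sw] at this
  split_ifs at this <;> omega

lemma sw_inj {ℓ : ℕ} (hℓ : ℓ % 2 = 0) {i j : Fin ℓ} (h : sw hℓ i = sw hℓ j) :
    i = j := by
  have := congrArg (sw hℓ) h
  rwa [sw_sw, sw_sw] at this

lemma fold_xor_zero {ℓ : ℕ} (hℓ : ℓ % 2 = 0) (s : Fin ℓ → ℕ)
    (hsym : ∀ i, s (sw hℓ i) = s i) :
    ∀ (n : ℕ) (t : Finset (Fin ℓ)), t.card ≤ n → (∀ i ∈ t, sw hℓ i ∈ t) →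
      t.fold (fun x y : ℕ => x ^^^ y) 0 s = 0 := by
  intro n
  induction n with
  | zero =>
    intro t ht _
    rw [Nat.le_zero, Finset.card_eq_zero] at ht
    subst ht
    simp
  | succ n ih =>
    intro t ht hcl
    rcases t.eq_empty_or_nonempty with rfl | ⟨i, hi⟩
    · simp
    · have hswi : sw hℓ i ∈ t := hcl i hi
      have hne : sw hℓ i ≠ i := sw_ne hℓ i
      set t' := (t.erase i).erase (sw hℓ i) with ht'
      have h1 : sw hℓ i ∉ t' := Finset.notMem_erase _ _
      have h2 : i ∉ insert (sw hℓ i) t' := by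
        simp [ht', Finset.mem_erase, Finset.mem_insert, Ne.symm hne]
      have hmem : sw hℓ i ∈ t.erase i := Finset.mem_erase.mpr ⟨hne, hswi⟩
      have hteq : t = insert i (insert (sw hℓ i) t') := by
        rw [ht', Finset.insert_erase hmem, Finset.insert_erase hi]
      have hcard : t'.card ≤ n := by
        have c1 : (t.erase i).card = t.card - 1 := Finset.card_erase_of_mem hi
        have c2 : t'.card = (t.erase i).card - 1 := Finset.card_erase_of_mem hmem
        omega
      have hcl' : ∀ j ∈ t', sw hℓ j ∈ t' := by
        intro j hj
        rw [ht', Finset.mem_erase, Finset.mem_erase] at hj ⊢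
        refine ⟨fun h => hj.2.1 (sw_inj hℓ h), fun h => hj.1 ?_, hcl j hj.2.2⟩
        have := congrArg (sw hℓ) h
        rwa [sw_sw] at this
      rw [hteq, Finset.fold_insert h2, Finset.fold_insert h1, ih t' hcard hcl',
        hsym i, Nat.xor_zero, Nat.xor_self]

lemma xor_fold_symm {ℓ : ℕ} (hℓ : ℓ % 2 = 0) (s : Fin ℓ → ℕ)
    (hsym : ∀ i, s (sw hℓ i) = s i) :
    Finset.univ.fold (fun x y : ℕ => x ^^^ y) 0 s = 0 :=
  fold_xor_zero hℓ s hsym _ Finset.univ le_rfl (fun i _ => Finset.mem_univ (sw hℓ i))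

lemma key_lemma {ℓ : ℕ} (hℓ : ℓ % 2 = 0) :
    ∀ (k : ℕ) (s : Fin ℓ → ℕ), (∀ i, s (sw hℓ i) = s i) → ¬ BNwins s (2 * k) := by
  intro k
  induction k with
  | zero =>
    intro s hsym
    exact fun h => h (xor_fold_symm hℓ s hsym)
  | succ k ih =>
    intro s hsym
    rw [show 2 * (k + 1) = 2 * k + 1 + 1 by ring]
    intro hwin
    obtain ⟨i, hi⟩ : ∃ i : Fin ℓ, ¬ BNwins (Function.update s i (s i + 1)) (2 * k + 1) :=
      hwin
    apply hi
    set s1 := Function.update s i (s i + 1) with hs1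
    show ∃ j : Fin ℓ, ¬ BNwins (Function.update s1 j (s1 j + 1)) (2 * k)
    refine ⟨sw hℓ i, ih (Function.update s1 (sw hℓ i) (s1 (sw hℓ i) + 1)) ?_⟩
    intro a
    have hne : sw hℓ i ≠ i := sw_ne hℓ i
    have hs1v : ∀ b, s1 b = if b = i then s i + 1 else s b := by
      intro b; simp [hs1, Function.update_apply]
    have hs2v : ∀ b, Function.update s1 (sw hℓ i) (s1 (sw hℓ i) + 1) b =
        if b = sw hℓ i then s (sw hℓ i) + 1 else if b = i then s i + 1 else s b := by
      intro b
      simp only [Function.update_apply, hs1v]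
      by_cases hb : b = sw hℓ i
      · simp [hb, hne]
      · simp [hb]
    rw [hs2v, hs2v]
    by_cases ha : a = i
    · subst ha
      simp [Ne.symm hne, hsym a]
    · by_cases ha2 : a = sw hℓ i
      · subst ha2
        simp [sw_sw, Ne.symm hne, hsym i]
      · have h3 : sw hℓ a ≠ sw hℓ i := fun h => ha (sw_inj hℓ h)
        have h4 : sw hℓ a ≠ i := fun h => ha2 (by
          have := congrArg (sw hℓ) h
          rwa [sw_sw] at this)
        simp [h3, h4, ha, ha2, hsym a]

/-- If both the number of tokens `n` and the number of stacks `ℓ` are even,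
the second player wins `BN(n, ℓ)`. -/
theorem second_player_wins_of_even_even (ℓ n : ℕ) (hℓ2 : 2 ≤ ℓ)
    (hℓ : Even ℓ) (hn : Even n) :
    ¬ BNwins (fun _ : Fin ℓ => 0) n := by
  have hℓ' : ℓ % 2 = 0 := Nat.even_iff.mp hℓ
  obtain ⟨k, hk⟩ := hn
  rw [show n = 2 * k by omega]
  exact key_lemma hℓ' k _ (fun _ => rfl)
end

section
/- For even n, the first player wins Building Nim BN(n,3) if and only if n is not of the form 2^k − 2 for any positive integer k; formally, for n even, BNwins (fun _ : Fin 3 => 0) n ↔ ¬ ∃ k ≥ 1, n = 2^k − 2. -/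
theorem BNwins.comp_perm {ℓ : ℕ} (σ : Equiv.Perm (Fin ℓ)) :
    ∀ (r : ℕ) (s : Fin ℓ → ℕ), BNwins (s ∘ σ) r ↔ BNwins s r
  | 0, s => by
    conv_rhs => rw [BNwins, ← Finset.map_univ_equiv σ, Finset.fold_map]
    rfl
  | r + 1, s => by
    simp only [BNwins, Function.comp_apply]
    refine (Equiv.exists_congr_left σ).trans (exists_congr fun i => ?_)
    rw [Equiv.apply_symm_apply, ← Function.update_comp_equiv, BNwins.comp_perm σ r]

theorem Nat.xor_xor_mod_two (a b c : ℕ) : (a ^^^ b ^^^ c) % 2 = (a + b + c) % 2 := by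
  rw [Nat.xor_mod_two_eq, Nat.add_mod, Nat.xor_mod_two_eq, ← Nat.add_mod]

theorem Nat.xor_eq_add_of_add_add_one_eq_two_pow :
    ∀ {K a b : ℕ}, a + b + 1 = 2 ^ K → a ^^^ b = a + b
  | 0, a, b, h => by
    obtain ⟨rfl, rfl⟩ : a = 0 ∧ b = 0 := by simp at h; omega
    rfl
  | K + 1, a, b, h => by
    rw [pow_succ] at h
    have := Nat.div_add_mod (a ^^^ b) 2
    rw [Nat.xor_div_two, Nat.xor_mod_two_eq,
      Nat.xor_eq_add_of_add_add_one_eq_two_pow (K := K) (by omega)] at this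
    omega

def Wins3 (a b c r : ℕ) : Prop := BNwins ![a, b, c] r

namespace Wins3

variable {a b c r : ℕ}

theorem zero_iff : Wins3 a b c 0 ↔ a ^^^ b ^^^ c ≠ 0 := by
  change a ^^^ (b ^^^ (c ^^^ 0)) ≠ 0 ↔ _
  rw [Nat.xor_zero, Nat.xor_assoc]

theorem succ_iff :
    Wins3 a b c (r + 1) ↔
      ¬Wins3 (a + 1) b c r ∨ ¬Wins3 a (b + 1) c r ∨ ¬Wins3 a b (c + 1) r := by
  simp only [Wins3, BNwins, Fin.exists_fin_succ, Fin.exists_fin_zero, or_false]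
  congr! 4 <;> ext i <;> fin_cases i <;> rfl

theorem not_succ_iff :
    ¬Wins3 a b c (r + 1) ↔
      Wins3 (a + 1) b c r ∧ Wins3 a (b + 1) c r ∧ Wins3 a b (c + 1) r := by
  rw [succ_iff]
  tauto

theorem add_two_iff : Wins3 a b c (r + 2) ↔
    (Wins3 (a + 2) b c r ∧ Wins3 (a + 1) (b + 1) c r ∧ Wins3 (a + 1) b (c + 1) r) ∨
    (Wins3 (a + 1) (b + 1) c r ∧ Wins3 a (b + 2) c r ∧ Wins3 a (b + 1) (c + 1) r) ∨
    (Wins3 (a + 1) b (c + 1) r ∧ Wins3 a (b + 1) (c + 1) r ∧ Wins3 a b (c + 2) r) := by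
  rw [succ_iff, not_succ_iff, not_succ_iff, not_succ_iff]

theorem swap_ab (h : Wins3 a b c r) : Wins3 b a c r := by
  have e : ![a, b, c] ∘ Equiv.swap 0 1 = ![b, a, c] := by
    ext i; fin_cases i <;> rfl
  rw [Wins3, ← e]
  exact (BNwins.comp_perm _ r _).2 h

theorem swap_bc (h : Wins3 a b c r) : Wins3 a c b r := by
  have e : ![a, b, c] ∘ Equiv.swap 1 2 = ![a, c, b] := by
    ext i; fin_cases i <;> rfl
  rw [Wins3, ← e]
  exact (BNwins.comp_perm _ r _).2 h

theorem swap_ac (h : Wins3 a b c r) : Wins3 c b a r :=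
  h.swap_ab.swap_bc.swap_ab

theorem zero_of_odd (a b c : ℕ) (h : (a + b + c) % 2 = 1) : Wins3 a b c 0 := by
  rw [zero_iff]
  have := Nat.xor_xor_mod_two a b c
  omega

theorem zero_of_halves {u v w : ℕ} (h : Wins3 u v w 0)
    (hs : (a + b + c) % 2 = 0 ∧ a / 2 = u ∧ b / 2 = v ∧ c / 2 = w) : Wins3 a b c 0 := by
  obtain ⟨hs, rfl, rfl, rfl⟩ := hs
  rw [zero_iff] at h ⊢
  have := Nat.div_add_mod (a ^^^ b ^^^ c) 2
  rw [Nat.xor_div_two, Nat.xor_div_two, Nat.xor_xor_mod_two] at this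
  omega

/-- If all three placements gave Nim-sum zero, `a + b + c` would be odd. Halving the heights, one
odd height gives two halved positions one token apart with Nim-sum zero, impossible by parity, and
three odd heights give a smaller counterexample. -/
theorem exists_succ_zero (a b c : ℕ) :
    Wins3 (a + 1) b c 0 ∨ Wins3 a (b + 1) c 0 ∨ Wins3 a b (c + 1) 0 := by
  induction a using Nat.strong_induction_on generalizing b c with
  | _ a ih =>
  by_contra! ⟨h₁, h₂, h₃⟩
  have hs : (a + b + c) % 2 = 1 := by
    by_contra hs
    exact h₁ (zero_of_odd _ _ _ (by omega))
  obtain ⟨a, rfl | rfl⟩ := Nat.even_or_odd' a <;>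
  obtain ⟨b, rfl | rfl⟩ := Nat.even_or_odd' b <;>
  obtain ⟨c, rfl | rfl⟩ := Nat.even_or_odd' c <;>
  try omega
  · rcases Nat.mod_two_eq_zero_or_one (a + b + c) with h | h
    · exact h₃ ((zero_of_odd a b (c + 1) (by omega)).zero_of_halves (by omega))
    · exact h₁ ((zero_of_odd a b c h).zero_of_halves (by omega))
  · rcases Nat.mod_two_eq_zero_or_one (a + b + c) with h | h
    · exact h₂ ((zero_of_odd a (b + 1) c (by omega)).zero_of_halves (by omega))
    · exact h₁ ((zero_of_odd a b c h).zero_of_halves (by omega))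
  · rcases Nat.mod_two_eq_zero_or_one (a + b + c) with h | h
    · exact h₁ ((zero_of_odd (a + 1) b c (by omega)).zero_of_halves (by omega))
    · exact h₂ ((zero_of_odd a b c h).zero_of_halves (by omega))
  · rcases ih a (by omega) b c with h | h | h
    · exact h₁ (h.zero_of_halves (by omega))
    · exact h₂ (h.zero_of_halves (by omega))
    · exact h₃ (h.zero_of_halves (by omega))

theorem not_of_add_eq {K : ℕ} :
    ∀ {q a b c : ℕ}, a + b = c → c + q + 1 = 2 ^ K → ¬Wins3 a b c (2 * q)
  | 0, a, b, c, hc, h => by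
    rw [zero_iff, not_not, Nat.xor_eq_add_of_add_add_one_eq_two_pow (a := a) (b := b) (K := K)
      (by omega), hc, Nat.xor_self]
  | q + 1, a, b, c, hc, h => by
    have h₁ : ¬Wins3 (a + 1) b (c + 1) (2 * q) := not_of_add_eq (K := K) (by omega) (by omega)
    have h₂ : ¬Wins3 a (b + 1) (c + 1) (2 * q) := not_of_add_eq (K := K) (by omega) (by omega)
    exact not_succ_iff.2
      ⟨succ_iff.2 (.inr (.inr h₁)), succ_iff.2 (.inr (.inr h₂)), succ_iff.2 (.inl h₁)⟩

theorem double_two (h : Wins3 a b c 0) : Wins3 (2 * a) (2 * b) (2 * c) 2 := by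
  rcases exists_succ_zero a b c with h' | h' | h'
  · exact add_two_iff.2 <| .inl ⟨h'.zero_of_halves (by omega), h.zero_of_halves (by omega),
      h.zero_of_halves (by omega)⟩
  · exact add_two_iff.2 <| .inr <| .inl ⟨h.zero_of_halves (by omega),
      h'.zero_of_halves (by omega), h.zero_of_halves (by omega)⟩
  · exact add_two_iff.2 <| .inr <| .inr ⟨h.zero_of_halves (by omega),
      h.zero_of_halves (by omega), h'.zero_of_halves (by omega)⟩

theorem two_of_odd_odd_even (h : (a + b + c) % 2 = 0) :
    Wins3 (2 * a + 1) (2 * b + 1) (2 * c) 2 :=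
  add_two_iff.2 <| .inr <| .inr
    ⟨(zero_of_odd (a + 1) b c (by omega)).zero_of_halves (by omega),
      (zero_of_odd a (b + 1) c (by omega)).zero_of_halves (by omega),
      (zero_of_odd a b (c + 1) (by omega)).zero_of_halves (by omega)⟩

theorem double_odd_two (h : Wins3 a (b + 1) c 0) : Wins3 (2 * a + 1) (2 * b + 1) (2 * c) 2 := by
  rcases Nat.mod_two_eq_zero_or_one (a + b + c) with hs | hs
  · exact two_of_odd_odd_even hs
  · exact add_two_iff.2 <| .inr <| .inl
      ⟨(zero_of_odd (a + 1) (b + 1) c (by omega)).zero_of_halves (by omega),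
        h.zero_of_halves (by omega), h.zero_of_halves (by omega)⟩

theorem two_of_sum_mod_four (h : (a + b + c) % 4 = 2) : Wins3 a b c 2 := by
  obtain ⟨a, rfl | rfl⟩ := Nat.even_or_odd' a <;>
  obtain ⟨b, rfl | rfl⟩ := Nat.even_or_odd' b <;>
  obtain ⟨c, rfl | rfl⟩ := Nat.even_or_odd' c <;>
  try omega
  · exact double_two (zero_of_odd a b c (by omega))
  · exact (two_of_odd_odd_even (a := b) (b := c) (c := a) (by omega)).swap_bc.swap_ab
  · exact (two_of_odd_odd_even (a := a) (b := c) (c := b) (by omega)).swap_bc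
  · exact two_of_odd_odd_even (by omega)

theorem of_sum_mod_four :
    ∀ {q a b c : ℕ}, (a + b + c + 2 * q) % 4 = 2 → Wins3 a b c (2 * q + 2)
  | 0, _, _, _, h => two_of_sum_mod_four h
  | q + 1, _, _, _, h => add_two_iff.2 <| .inl
      ⟨of_sum_mod_four (by omega), of_sum_mod_four (by omega), of_sum_mod_four (by omega)⟩

end Wins3

def DoublingEven (q : ℕ) : Prop :=
  ∀ a b c, Wins3 a b c (2 * q) → Wins3 (2 * a) (2 * b) (2 * c) (4 * q + 2)

/-- The companion of `DoublingEven` in which two stacks carry half a token each, rounded up on the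
second stack. -/
def DoublingOdd (q : ℕ) : Prop :=
  ∀ a b c, Wins3 a (b + 1) c (2 * q) → Wins3 (2 * a + 1) (2 * b + 1) (2 * c) (4 * q + 2)

namespace Wins3

variable {q a b c : ℕ}

theorem double_of_succ_left (hP : DoublingEven q) (hS : DoublingOdd q)
    (h : Wins3 (a + 1) b c (2 * q)) : Wins3 (2 * a) (2 * b) (2 * c) (4 * q + 4) :=
  add_two_iff.2 <| .inl ⟨hP (a + 1) b c h, (hS b a c h.swap_ab).swap_ab,
    (hS c a b h.swap_bc.swap_ab).swap_ab.swap_bc⟩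

theorem double_odd_of_succ_succ (hP : DoublingEven q) (hS : DoublingOdd q)
    (h : Wins3 (a + 1) (b + 1) c (2 * q)) :
    Wins3 (2 * a + 1) (2 * b + 1) (2 * c) (4 * q + 4) :=
  add_two_iff.2 <| .inl ⟨hS (a + 1) b c h, hP (a + 1) (b + 1) c h,
    (hS c b (a + 1) h.swap_ac).swap_ac⟩

theorem double_of_first (hP : DoublingEven q) (hS : DoublingOdd q)
    (h₁ : Wins3 (a + 2) b c (2 * q)) (h₂ : Wins3 (a + 1) (b + 1) c (2 * q))
    (h₃ : Wins3 (a + 1) b (c + 1) (2 * q)) : Wins3 (2 * a) (2 * b) (2 * c) (4 * q + 6) :=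
  add_two_iff.2 <| .inl ⟨double_of_succ_left hP hS h₁, double_odd_of_succ_succ hP hS h₂,
    (double_odd_of_succ_succ hP hS h₃.swap_bc).swap_bc⟩

theorem double_odd_of_succ_succ_succ (hP : DoublingEven q) (hS : DoublingOdd q)
    (h : Wins3 (a + 1) (b + 1) (c + 1) (2 * q)) :
    Wins3 (2 * a + 1) (2 * b + 1) (2 * c) (4 * q + 6) := by
  have h₁ : Wins3 (2 * c + 1) (2 * b + 1) (2 * (a + 1)) (4 * q + 4) :=
    double_odd_of_succ_succ hP hS h.swap_ac
  have h₂ : Wins3 (2 * a + 1) (2 * c + 1) (2 * (b + 1)) (4 * q + 4) :=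
    double_odd_of_succ_succ hP hS h.swap_bc
  have h₃ : Wins3 (2 * a + 1) (2 * b + 1) (2 * (c + 1)) (4 * q + 4) :=
    double_odd_of_succ_succ hP hS h
  exact add_two_iff.2 <| .inr <| .inr ⟨h₁.swap_ac, h₂.swap_bc, h₃⟩

theorem double_odd_of_second (hP : DoublingEven q) (hS : DoublingOdd q)
    (h₁ : Wins3 (a + 1) (b + 2) c (2 * q)) (h₃ : Wins3 a (b + 2) (c + 1) (2 * q)) :
    Wins3 (2 * a + 1) (2 * b + 1) (2 * c) (4 * q + 6) := by
  have r₁ : Wins3 (2 * (b + 1)) (2 * (a + 1)) (2 * c) (4 * q + 4) :=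
    double_of_succ_left hP hS h₁.swap_ab
  have r₂ : Wins3 (2 * a + 1) (2 * (b + 1) + 1) (2 * c) (4 * q + 4) :=
    double_odd_of_succ_succ hP hS h₁
  have r₃₁ : Wins3 (2 * c + 1) (2 * (b + 1) + 1) (2 * (a + 1)) (4 * q + 2) :=
    hS c (b + 1) (a + 1) h₁.swap_ac
  have r₃₂ : Wins3 (2 * c + 1) (2 * a + 1) (2 * (b + 2)) (4 * q + 2) :=
    hS c a (b + 2) h₁.swap_bc.swap_ab
  have r₃ : Wins3 (2 * a + 1) (2 * b + 2) (2 * c + 1) (4 * q + 4) :=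
    add_two_iff.2 <| .inr <| .inl
      ⟨r₃₁.swap_ac, r₃₂.swap_ab.swap_bc, hS a (b + 1) (c + 1) h₃⟩
  exact add_two_iff.2 <| .inr <| .inl ⟨r₁.swap_ab, r₂, r₃⟩

end Wins3

theorem DoublingEven.succ {q : ℕ} (hP : DoublingEven q) (hS : DoublingOdd q) :
    DoublingEven (q + 1) := by
  intro a b c h
  rw [show 4 * (q + 1) + 2 = 4 * q + 6 by ring]
  obtain ⟨h₁, h₂, h₃⟩ | ⟨h₁, h₂, h₃⟩ | ⟨h₁, h₂, h₃⟩ := Wins3.add_two_iff.1 h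
  · exact Wins3.double_of_first hP hS h₁ h₂ h₃
  · exact (Wins3.double_of_first hP hS h₂.swap_ab h₁.swap_ab h₃.swap_ab).swap_ab
  · exact (Wins3.double_of_first hP hS h₃.swap_ac h₂.swap_ac h₁.swap_ac).swap_ac

theorem DoublingOdd.succ {q : ℕ} (hP : DoublingEven q) (hS : DoublingOdd q) :
    DoublingOdd (q + 1) := by
  intro a b c h
  rw [show 4 * (q + 1) + 2 = 4 * q + 6 by ring]
  obtain ⟨-, -, h₃⟩ | ⟨h₁, -, h₃⟩ | ⟨h₁, -, -⟩ := Wins3.add_two_iff.1 h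
  · exact Wins3.double_odd_of_succ_succ_succ hP hS h₃
  · exact Wins3.double_odd_of_second hP hS h₁ h₃
  · exact Wins3.double_odd_of_succ_succ_succ hP hS h₁

theorem doublingEven_and_doublingOdd : ∀ q, DoublingEven q ∧ DoublingOdd q
  | 0 => ⟨fun _ _ _ => Wins3.double_two, fun _ _ _ => Wins3.double_odd_two⟩
  | q + 1 =>
    have ⟨hP, hS⟩ := doublingEven_and_doublingOdd q
    ⟨hP.succ hS, hS.succ hP⟩

theorem Wins3.double {q a b c : ℕ} (h : Wins3 a b c (2 * q)) :
    Wins3 (2 * a) (2 * b) (2 * c) (4 * q + 2) :=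
  (doublingEven_and_doublingOdd q).1 a b c h

theorem Wins3.zeros_of_ne_two_pow {n : ℕ} (hn : Even n) (h : ∀ k, n + 2 ≠ 2 ^ k) :
    Wins3 0 0 0 n := by
  induction n using Nat.strong_induction_on with
  | _ n ih =>
  obtain ⟨m, rfl⟩ := hn
  obtain ⟨q, rfl | rfl⟩ := Nat.even_or_odd' m
  · obtain _ | q := q
    · exact absurd rfl (h 1)
    · have := Wins3.of_sum_mod_four (q := 2 * q + 1) (a := 0) (b := 0) (c := 0) (by omega)
      rwa [show 2 * (2 * q + 1) + 2 = 2 * (q + 1) + 2 * (q + 1) by ring] at this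
  · have hq : Wins3 0 0 0 (2 * q) :=
      ih _ (by omega) (even_two_mul q) fun k hk => h (k + 1) (by rw [pow_succ]; omega)
    exact (show 2 * q + 1 + (2 * q + 1) = 4 * q + 2 by ring) ▸ hq.double

theorem Wins3.not_zeros_of_eq_two_pow {n k : ℕ} (h : n + 2 = 2 ^ k) : ¬Wins3 0 0 0 n := by
  obtain _ | K := k
  · simp at h
  · rw [pow_succ] at h
    have := Wins3.not_of_add_eq (K := K) (q := n / 2) (a := 0) (b := 0) (c := 0) rfl (by omega)
    rwa [show 2 * (n / 2) = n by omega] at this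

theorem exists_eq_two_pow_sub_two_iff {n : ℕ} :
    (∃ k ≥ 1, n = 2 ^ k - 2) ↔ ∃ k, n + 2 = 2 ^ k := by
  refine ⟨fun ⟨k, hk, h⟩ => ⟨k, ?_⟩, fun ⟨k, h⟩ => ⟨k, ?_, by omega⟩⟩
  · have := Nat.one_lt_two_pow (n := k) (by omega)
    omega
  · rcases k with _ | k
    · simp at h
    · omega

/-- For even `n`, the first player wins `BN(n, 3)` iff `n ≠ 2 ^ k - 2` for
every positive integer `k`. -/
theorem first_player_wins_three_stacks_iff (n : ℕ) (hn : Even n) :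
    BNwins (fun _ : Fin 3 => 0) n ↔ ¬ ∃ k ≥ 1, n = 2 ^ k - 2 := by
  have hs : (fun _ : Fin 3 => 0) = ![0, 0, 0] := by
    ext i; fin_cases i <;> rfl
  rw [hs, exists_eq_two_pow_sub_two_iff, not_exists]
  exact ⟨fun h k hk => Wins3.not_zeros_of_eq_two_pow hk h, Wins3.zeros_of_ne_two_pow hn⟩
end

section
/- If ℓ is odd with ℓ > 3 and n is even with n ≤ ℓ + 3, then the second player wins Building Nim BN(n,ℓ); formally, ¬ BNwins (fun _ : Fin ℓ => 0) n whenever ℓ is odd, ℓ > 3, n is even, and n ≤ ℓ + 3. -/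
namespace BNaux
open Finset

variable {ℓ : ℕ}

def fx (s : Fin ℓ → ℕ) : ℕ := Finset.univ.fold (fun x y : ℕ => x ^^^ y) 0 s

lemma xor_cancel_left' (a x : ℕ) : (a ^^^ x) ^^^ a = x := by
  rw [Nat.xor_comm a x, Nat.xor_assoc, Nat.xor_self, Nat.xor_zero]

lemma fx_update (s : Fin ℓ → ℕ) (i : Fin ℓ) (v : ℕ) :
    fx (Function.update s i v) = fx s ^^^ s i ^^^ v := by
  classical
  set E := Finset.univ.erase i with hE
  have hni : i ∉ E := Finset.notMem_erase i _
  have hU : (Finset.univ : Finset (Fin ℓ)) = insert i E :=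
    (Finset.insert_erase (Finset.mem_univ i)).symm
  have h1 : fx (Function.update s i v)
      = v ^^^ E.fold (fun x y : ℕ => x ^^^ y) 0 s := by
    rw [fx, hU, Finset.fold_insert hni, Function.update_self]
    congr 1
    refine Finset.fold_congr ?_
    intro j hj
    exact Function.update_of_ne (Finset.ne_of_mem_erase hj) _ _
  have h2 : fx s = s i ^^^ E.fold (fun x y : ℕ => x ^^^ y) 0 s := by
    rw [fx, hU, Finset.fold_insert hni]
  rw [h1, h2, xor_cancel_left', Nat.xor_comm]

def Pairing (s : Fin ℓ → ℕ) (f : Fin ℓ → Fin ℓ) : Prop :=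
  ∀ i, f (f i) = i ∧ s (f i) = s i ∧ (f i = i ↔ s i = 0)

lemma fold_zero_of_pairing (s : Fin ℓ → ℕ) (f : Fin ℓ → Fin ℓ) (hp : Pairing s f) :
    ∀ (n : ℕ) (T : Finset (Fin ℓ)), T.card ≤ n → (∀ i ∈ T, f i ∈ T) →
      T.fold (fun x y : ℕ => x ^^^ y) 0 s = 0 := by
  intro n
  induction n with
  | zero =>
      intro T hc _
      have : T = ∅ := Finset.card_eq_zero.mp (Nat.le_zero.mp hc)
      simp [this]
  | succ n ih =>
      intro T hc hT
      rcases T.eq_empty_or_nonempty with rfl | ⟨i, hi⟩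
      · simp
      by_cases hfi : f i = i
      · have hsi : s i = 0 := ((hp i).2.2).mp hfi
        have hT' : ∀ j ∈ T.erase i, f j ∈ T.erase i := by
          intro j hj
          have hjT := Finset.mem_of_mem_erase hj
          have hjne := Finset.ne_of_mem_erase hj
          refine Finset.mem_erase.mpr ⟨?_, hT j hjT⟩
          intro h
          exact hjne (by rw [← (hp j).1, h, hfi])
        have hrec := ih (T.erase i) (by
          have := Finset.card_erase_of_mem hi; omega) hT'
        have hins : T = insert i (T.erase i) := (Finset.insert_erase hi).symm
        rw [hins, Finset.fold_insert (Finset.notMem_erase i _), hrec, hsi]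
        simp
      · have hfiT : f i ∈ T := hT i hi
        have hfi2 : f i ∈ T.erase i := Finset.mem_erase.mpr ⟨hfi, hfiT⟩
        have hiT' : i ∉ (T.erase i).erase (f i) := fun h =>
          Finset.notMem_erase i _ (Finset.mem_of_mem_erase h)
        have hfiT' : f i ∉ (T.erase i).erase (f i) := Finset.notMem_erase (f i) _
        have hTsplit : T = insert i (insert (f i) ((T.erase i).erase (f i))) := by
          rw [Finset.insert_erase hfi2, Finset.insert_erase hi]
        have hclos : ∀ j ∈ (T.erase i).erase (f i), f j ∈ (T.erase i).erase (f i) := by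
          intro j hj
          have hj1 : j ≠ f i := Finset.ne_of_mem_erase hj
          have hj2 : j ≠ i := Finset.ne_of_mem_erase (Finset.mem_of_mem_erase hj)
          have hjT : j ∈ T := Finset.mem_of_mem_erase (Finset.mem_of_mem_erase hj)
          refine Finset.mem_erase.mpr ⟨?_, Finset.mem_erase.mpr ⟨?_, hT j hjT⟩⟩
          · intro h; exact hj2 (by rw [← (hp j).1, h, (hp i).1])
          · intro h; exact hj1 (by rw [← (hp j).1, h])
        have hcard : ((T.erase i).erase (f i)).card ≤ n := by
          have h1 := Finset.card_erase_of_mem hi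
          have h3 := Finset.card_erase_of_mem hfi2
          have h4 : 0 < (T.erase i).card := Finset.card_pos.mpr ⟨f i, hfi2⟩
          omega
        have hrec := ih _ hcard hclos
        rw [hTsplit, Finset.fold_insert (by
              simp only [Finset.mem_insert]
              push_neg
              exact ⟨fun h => hfi h.symm, hiT'⟩),
            Finset.fold_insert hfiT', hrec, (hp i).2.1]
        simp

lemma fx_zero_of_pairing {s : Fin ℓ → ℕ} {f : Fin ℓ → Fin ℓ} (hp : Pairing s f) :
    fx s = 0 :=
  fold_zero_of_pairing s f hp Finset.univ.card Finset.univ le_rfl (fun i _ => Finset.mem_univ _)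

def S (s : Fin ℓ → ℕ) : ℕ := ∑ i, s i
def Z (s : Fin ℓ → ℕ) : ℕ := (Finset.univ.filter (fun i => s i = 0)).card
def NZ (s : Fin ℓ → ℕ) : Finset (Fin ℓ) := Finset.univ.filter (fun i => s i ≠ 0)

lemma even_xor_succ (e : ℕ) (he : Even e) : e ^^^ (e + 1) = 1 := by
  obtain ⟨m, rfl⟩ := he
  have hm : m + m = 2 * m := by ring
  rw [hm]
  apply Nat.eq_of_testBit_eq
  intro k
  rw [Nat.testBit_xor]
  cases k with
  | zero => simp [Nat.testBit_zero]
  | succ k =>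
      rw [Nat.testBit_succ, Nat.testBit_succ, Nat.testBit_succ]
      have h1 : 2*m/2 = m := by omega
      have h2 : (2*m+1)/2 = m := by omega
      have h3 : (1:ℕ)/2 = 0 := by norm_num
      rw [h1, h2, h3, Nat.zero_testBit, Bool.xor_self]

lemma S_update (s : Fin ℓ → ℕ) (i : Fin ℓ) (v : ℕ) :
    S (Function.update s i v) + s i = S s + v := by
  classical
  have h1 := Finset.sum_update_of_mem (Finset.mem_univ i) s v
  have h2 : ∑ j ∈ Finset.univ \ {i}, s j + s i = S s := by
    rw [S, ← Finset.sum_eq_sum_sdiff_singleton_add (Finset.mem_univ i) s]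
  rw [S, h1]
  omega

lemma Z_NZ (s : Fin ℓ → ℕ) : Z s + (NZ s).card = ℓ := by
  classical
  rw [Z, NZ]
  rw [Finset.card_filter_add_card_filter_not (fun i => s i = 0)]
  simp

lemma card_NZ_le_S (s : Fin ℓ → ℕ) : (NZ s).card ≤ S s := by
  classical
  calc (NZ s).card = ∑ _i ∈ NZ s, 1 := by simp
    _ ≤ ∑ i ∈ NZ s, s i := Finset.sum_le_sum (by
        intro i hi
        have := (Finset.mem_filter.mp hi).2
        omega)
    _ ≤ ∑ i, s i := Finset.sum_le_sum_of_subset (Finset.filter_subset _ _)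

lemma S_lb_one (s : Fin ℓ → ℕ) (a : Fin ℓ) (ha : s a ≠ 0) :
    s a + ((NZ s).card - 1) ≤ S s := by
  classical
  have haNZ : a ∈ NZ s := Finset.mem_filter.mpr ⟨Finset.mem_univ a, ha⟩
  have h1 : ∑ i ∈ (NZ s).erase a, 1 ≤ ∑ i ∈ (NZ s).erase a, s i :=
    Finset.sum_le_sum (by
      intro i hi
      have := (Finset.mem_filter.mp (Finset.mem_of_mem_erase hi)).2
      omega)
  have h2 : s a + ∑ i ∈ (NZ s).erase a, s i = ∑ i ∈ NZ s, s i :=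
    Finset.add_sum_erase _ s haNZ
  have h3 : ∑ i ∈ NZ s, s i ≤ S s := Finset.sum_le_sum_of_subset (Finset.filter_subset _ _)
  have h4 := Finset.card_erase_of_mem haNZ
  simp only [Finset.sum_const, smul_eq_mul, mul_one] at h1
  omega

lemma S_lb_two (s : Fin ℓ → ℕ) (a b : Fin ℓ) (hab : a ≠ b) (ha : s a ≠ 0) (hb : s b ≠ 0) :
    s a + s b + ((NZ s).card - 2) ≤ S s := by
  classical
  have haNZ : a ∈ NZ s := Finset.mem_filter.mpr ⟨Finset.mem_univ a, ha⟩
  have hbNZ : b ∈ (NZ s).erase a := Finset.mem_erase.mpr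
    ⟨fun h => absurd h.symm hab, Finset.mem_filter.mpr ⟨Finset.mem_univ b, hb⟩⟩
  have h1 : ∑ i ∈ ((NZ s).erase a).erase b, 1 ≤ ∑ i ∈ ((NZ s).erase a).erase b, s i :=
    Finset.sum_le_sum (by
      intro i hi
      have := (Finset.mem_filter.mp
        (Finset.mem_of_mem_erase (Finset.mem_of_mem_erase hi))).2
      omega)
  have h2 : s b + ∑ i ∈ ((NZ s).erase a).erase b, s i = ∑ i ∈ (NZ s).erase a, s i :=
    Finset.add_sum_erase _ s hbNZ
  have h2' : s a + ∑ i ∈ (NZ s).erase a, s i = ∑ i ∈ NZ s, s i :=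
    Finset.add_sum_erase _ s haNZ
  have h3 : ∑ i ∈ NZ s, s i ≤ S s := Finset.sum_le_sum_of_subset (Finset.filter_subset _ _)
  have h4 := Finset.card_erase_of_mem haNZ
  have h5 := Finset.card_erase_of_mem hbNZ
  simp only [Finset.sum_const, smul_eq_mul, mul_one] at h1
  omega

lemma S_bump (s : Fin ℓ → ℕ) (i : Fin ℓ) : S (Function.update s i (s i + 1)) = S s + 1 := by
  have := S_update s i (s i + 1); omega

lemma all_le_one (s : Fin ℓ → ℕ) (h : S s ≤ (NZ s).card) : ∀ a, s a ≤ 1 := by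
  intro a
  by_contra hgt
  push_neg at hgt
  have ha : s a ≠ 0 := by omega
  have h1 := S_lb_one s a ha
  have h2 : 1 ≤ (NZ s).card := Finset.card_pos.mpr
    ⟨a, Finset.mem_filter.mpr ⟨Finset.mem_univ a, ha⟩⟩
  omega

lemma Z_congr {s t : Fin ℓ → ℕ} (h : ∀ k, t k = 0 ↔ s k = 0) : Z t = Z s := by
  unfold Z
  congr 1
  apply Finset.filter_congr
  intro k _
  simp [h k]

lemma Z_drop2 {s t : Fin ℓ → ℕ} {i j : Fin ℓ} (hij : i ≠ j) (hi : s i = 0) (hj : s j = 0)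
    (ht : ∀ k, t k = 0 ↔ (s k = 0 ∧ k ≠ i ∧ k ≠ j)) : Z s = Z t + 2 := by
  classical
  have hset : Finset.univ.filter (fun k => s k = 0)
      = insert i (insert j (Finset.univ.filter (fun k => t k = 0))) := by
    ext k
    simp only [Finset.mem_filter, Finset.mem_univ, true_and, Finset.mem_insert]
    constructor
    · intro hk
      by_cases h1 : k = i
      · exact Or.inl h1
      by_cases h2 : k = j
      · exact Or.inr (Or.inl h2)
      · exact Or.inr (Or.inr ((ht k).mpr ⟨hk, h1, h2⟩))
    · rintro (rfl | rfl | hk)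
      · exact hi
      · exact hj
      · exact ((ht k).mp hk).1
  have hjmem : j ∉ Finset.univ.filter (fun k => t k = 0) := by
    simp only [Finset.mem_filter, Finset.mem_univ, true_and]
    intro h
    exact ((ht j).mp h).2.2 rfl
  have himem : i ∉ insert j (Finset.univ.filter (fun k => t k = 0)) := by
    simp only [Finset.mem_insert, Finset.mem_filter, Finset.mem_univ, true_and]
    push_neg
    exact ⟨hij, fun h => ((ht i).mp h).2.1 rfl⟩
  rw [Z, Z, hset, Finset.card_insert_of_notMem himem, Finset.card_insert_of_notMem hjmem]

lemma Pairing.fix_of_zero {s : Fin ℓ → ℕ} {f} (hp : Pairing s f) {i} (h : s i = 0) :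
    f i = i := (hp i).2.2.mpr h

lemma Pairing.ne_of_nonzero {s : Fin ℓ → ℕ} {f} (hp : Pairing s f) {i} (h : s i ≠ 0) :
    f i ≠ i := fun he => h ((hp i).2.2.mp he)

lemma Pairing.mirror {s : Fin ℓ → ℕ} {f} (hp : Pairing s f) {i : Fin ℓ} (hi : s i ≠ 0)
    {t : Fin ℓ → ℕ} (ht1 : t i = s i + 1) (ht2 : t (f i) = s i + 1)
    (ht3 : ∀ k, k ≠ i → k ≠ f i → t k = s k) : Pairing t f := by
  have hfii : f i ≠ i := hp.ne_of_nonzero hi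
  intro k
  by_cases h1 : k = i
  · subst h1
    refine ⟨(hp k).1, by rw [ht1, ht2], ?_⟩
    constructor
    · intro h; exact absurd h hfii
    · intro h; rw [ht1] at h; omega
  by_cases h2 : k = f i
  · subst h2
    have hff : f (f i) = i := (hp i).1
    refine ⟨by rw [hff], ?_, ?_⟩
    · rw [hff, ht1, ht2]
    · constructor
      · intro h; rw [hff] at h; exact absurd h.symm hfii
      · intro h; rw [ht2] at h; omega
  · have hf1 : f k ≠ i := by
      intro h
      have h' := (hp k).1
      rw [h] at h'
      exact h2 h'.symm
    have hf2 : f k ≠ f i := by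
      intro h
      have h' := (hp k).1
      rw [h, (hp i).1] at h'
      exact h1 h'.symm
    have ht : t (f k) = s (f k) := ht3 _ hf1 hf2
    have htk : t k = s k := ht3 _ h1 h2
    exact ⟨(hp k).1, by rw [ht, htk, (hp k).2.1], by rw [htk]; exact (hp k).2.2⟩

lemma Pairing.zpair {s : Fin ℓ → ℕ} {f} (hp : Pairing s f) {i j : Fin ℓ} (hij : i ≠ j)
    (hi : s i = 0) (hj : s j = 0)
    {t : Fin ℓ → ℕ} (ht1 : t i = 1) (ht2 : t j = 1)
    (ht3 : ∀ k, k ≠ i → k ≠ j → t k = s k) :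
    Pairing t (fun k => if k = i then j else if k = j then i else f k) := by
  have hfi : f i = i := hp.fix_of_zero hi
  have hfj : f j = j := hp.fix_of_zero hj
  set F := fun k => if k = i then j else if k = j then i else f k with hF
  have Fi : F i = j := by simp [hF]
  have Fj : F j = i := by
    simp only [hF]
    rw [if_neg (fun h : j = i => hij h.symm)]
    simp
  have Fk : ∀ k, k ≠ i → k ≠ j → F k = f k := by
    intro k h1 h2
    simp only [hF]
    rw [if_neg h1, if_neg h2]
  show Pairing t F
  intro k
  by_cases h1 : k = i
  · rw [h1, Fi, Fj]
    refine ⟨rfl, by rw [ht1, ht2], ?_⟩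
    constructor
    · intro h; exact absurd h.symm hij
    · intro h; rw [ht1] at h; omega
  by_cases h2 : k = j
  · rw [h2, Fj, Fi]
    refine ⟨rfl, by rw [ht1, ht2], ?_⟩
    constructor
    · intro h; exact absurd h hij
    · intro h; rw [ht2] at h; omega
  · have hfk1 : f k ≠ i := by
      intro h
      have h' := (hp k).1
      rw [h, hfi] at h'
      exact h1 h'.symm
    have hfk2 : f k ≠ j := by
      intro h
      have h' := (hp k).1
      rw [h, hfj] at h'
      exact h2 h'.symm
    rw [Fk k h1 h2, Fk (f k) hfk1 hfk2]
    have htk : t k = s k := ht3 _ h1 h2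
    have htfk : t (f k) = s (f k) := ht3 _ hfk1 hfk2
    exact ⟨(hp k).1, by rw [htk, htfk, (hp k).2.1], by rw [htk]; exact (hp k).2.2⟩

/-- The invariant maintained by player 2. -/
def GOOD (s : Fin ℓ → ℕ) (r : ℕ) : Prop :=
  S s + r ≤ ℓ + 3 ∧
  ((r = 0 ∧ fx s = 0) ∨
   (∃ f, Pairing s f ∧ Odd (Z s) ∧
     ((r = 2 ∧ (Z s = 1 → ∃ e, s e ≠ 0 ∧ Even (s e))) ∨
      (2 ≤ r ∧ Even r ∧ 3 ≤ Z s) ∨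
      (r = 4 ∧ Z s = 1))) ∨
   (r = 2 ∧ ∃ i₀, s i₀ = 2 ∧ (∃ f, Pairing (Function.update s i₀ 0) f) ∧
      (∀ j, j ≠ i₀ → s j ≤ 1) ∧ (∃ k, s k = 1)))

/-- Answering a move on the last usable empty stack by doubling up on it,
entering the `B` family. -/
lemma enterB {s : Fin ℓ → ℕ} {f} (hp : Pairing s f) {i : Fin ℓ} (hsi : s i = 0)
    (hall : ∀ a, s a ≤ 1) (hbig : 1 ≤ (NZ s).card) (hbud : S s + 4 ≤ ℓ + 3) :
    GOOD (Function.update (Function.update s i (s i + 1)) i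
      (Function.update s i (s i + 1) i + 1)) 2 := by
  classical
  set u := Function.update s i (s i + 1) with hu
  set t := Function.update u i (u i + 1) with htdef
  have hti : t i = 2 := by
    rw [htdef, Function.update_self, hu, Function.update_self, hsi]
  have htk : ∀ k, k ≠ i → t k = s k := by
    intro k hk
    rw [htdef, Function.update_of_ne hk, hu, Function.update_of_ne hk]
  have hSt : S t = S s + 2 := by
    have e2 : S t = S u + 1 := by rw [htdef]; exact S_bump u i
    have e1 : S u = S s + 1 := by rw [hu]; exact S_bump s i
    omega
  refine ⟨by omega, Or.inr (Or.inr ⟨rfl, i, hti, ?_, ?_, ?_⟩)⟩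
  · refine ⟨f, ?_⟩
    have : Function.update t i 0 = s := by
      funext k
      by_cases hk : k = i
      · rw [hk, Function.update_self, hsi]
      · rw [Function.update_of_ne hk, htk k hk]
    rw [this]
    exact hp
  · intro j hj
    rw [htk j hj]
    exact hall j
  · obtain ⟨a, ha⟩ := Finset.card_pos.mp hbig
    have ha0 : s a ≠ 0 := (Finset.mem_filter.mp ha).2
    have hai : a ≠ i := fun h => ha0 (h ▸ hsi)
    exact ⟨a, by rw [htk a hai]; have := hall a; omega⟩

/-- The key closure property: from any invariant state, after any move by player 1
there is a reply by player 2 restoring the invariant. -/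
lemma closure (hl5 : 5 ≤ ℓ) (s : Fin ℓ → ℕ) (r₀ : ℕ)
    (h : GOOD s (r₀ + 2)) (i : Fin ℓ) :
    ∃ j : Fin ℓ, GOOD
      (Function.update (Function.update s i (s i + 1)) j
        (Function.update s i (s i + 1) j + 1)) r₀ := by
  classical
  obtain ⟨hbud, hcase⟩ := h
  set u := Function.update s i (s i + 1) with hu
  have hui : u i = s i + 1 := by rw [hu]; exact Function.update_self _ _ _
  have huk : ∀ k, k ≠ i → u k = s k := by
    intro k hk; rw [hu]; exact Function.update_of_ne hk _ _
  have hSu : S u = S s + 1 := by rw [hu]; exact S_bump s i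
  have hS2 : ∀ j, S (Function.update u j (u j + 1)) = S s + 2 := by
    intro j; rw [S_bump u j]; omega
  rcases hcase with ⟨h0, _⟩ | ⟨f, hp, hodd, hcond⟩ | ⟨hr2, i₀, hi₀2, ⟨g, hg⟩, hle1, k₁, hk₁⟩
  · omega
  · -- A branch
    by_cases hsi : s i = 0
    · -- player 1 moved on an empty stack
      have hiZ : i ∈ Finset.univ.filter (fun k => s k = 0) :=
        Finset.mem_filter.mpr ⟨Finset.mem_univ i, hsi⟩
      have hZ1 : 1 ≤ Z s := Finset.card_pos.mpr ⟨i, hiZ⟩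
      have hZNZ := Z_NZ s
      have hSlb := card_NZ_le_S s
      by_cases hZone : Z s = 1
      · rcases hcond with ⟨hr2', he⟩ | ⟨_, _, hZ3⟩ | ⟨hr4, _⟩
        · -- r₀ = 0 : answer on the even stack e
          have hr0 : r₀ = 0 := by omega
          obtain ⟨e, he0, heE⟩ := he hZone
          have hei : e ≠ i := fun h => he0 (by rw [h, hsi])
          refine ⟨e, ⟨by rw [hS2]; omega, Or.inl ⟨hr0, ?_⟩⟩⟩
          have hfxu : fx u = 1 := by
            rw [hu, fx_update, fx_zero_of_pairing hp, hsi]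
            decide
          rw [fx_update, hfxu, huk e hei, Nat.xor_assoc, even_xor_succ _ heE]
          decide
        · omega
        · -- r₀ = 2 : all stacks are ones; double up on i
          have hr0 : r₀ = 2 := by omega
          have hall : ∀ a, s a ≤ 1 := all_le_one s (by omega)
          subst hr0
          exact ⟨i, enterB hp hsi hall (by omega) (by omega)⟩
      · -- at least three zeros
        have hZ3 : 3 ≤ Z s := by obtain ⟨m, hm⟩ := hodd; omega
        have hcard1 : 1 < (Finset.univ.filter (fun k => s k = 0)).card := by
          have : (Finset.univ.filter (fun k => s k = 0)).card = Z s := rfl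
          omega
        obtain ⟨j, hjmem, hji⟩ := Finset.exists_mem_ne hcard1 i
        have hsj : s j = 0 := (Finset.mem_filter.mp hjmem).2
        have hij : i ≠ j := fun h => hji h.symm
        have htj : Function.update u j (u j + 1) j = 1 := by
          rw [Function.update_self, huk j hji, hsj]
        have hti : Function.update u j (u j + 1) i = 1 := by
          rw [Function.update_of_ne hij, hui, hsi]
        have htk : ∀ k, k ≠ i → k ≠ j → Function.update u j (u j + 1) k = s k := by
          intro k hk1 hk2
          rw [Function.update_of_ne hk2, huk k hk1]
        have hpz := hp.zpair hij hsi hsj hti htj htk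
        have hZd : Z s = Z (Function.update u j (u j + 1)) + 2 := by
          refine Z_drop2 hij hsi hsj ?_
          intro k
          constructor
          · intro hk
            by_cases h1 : k = i
            · rw [h1, hti] at hk; omega
            by_cases h2 : k = j
            · rw [h2, htj] at hk; omega
            · rw [htk k h1 h2] at hk; exact ⟨hk, h1, h2⟩
          · rintro ⟨hk, h1, h2⟩
            rw [htk k h1 h2]; exact hk
        have hZodd' : Odd (Z (Function.update u j (u j + 1))) := by
          obtain ⟨m, hm⟩ := hodd; exact ⟨m - 1, by omega⟩
        by_cases hr0 : r₀ = 0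
        · exact ⟨j, ⟨by rw [hS2]; omega, Or.inl ⟨hr0, fx_zero_of_pairing hpz⟩⟩⟩
        · have hevr : Even r₀ := by
            rcases hcond with ⟨h2', _⟩ | ⟨_, hev, _⟩ | ⟨h4', _⟩
            · omega
            · obtain ⟨m, hm⟩ := hev; exact ⟨m - 1, by omega⟩
            · exact ⟨1, by omega⟩
          obtain ⟨m₀, hm₀⟩ := id hevr
          by_cases hZ5 : 5 ≤ Z s
          · refine ⟨j, ⟨by rw [hS2]; omega, Or.inr (Or.inl ⟨_, hpz, hZodd',
              Or.inr (Or.inl ⟨by omega, hevr, by omega⟩)⟩)⟩⟩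
          · have hZe3 : Z s = 3 := by obtain ⟨m, hm⟩ := hodd; omega
            by_cases hr4 : r₀ = 4
            · refine ⟨j, ⟨by rw [hS2]; omega, Or.inr (Or.inl ⟨_, hpz, hZodd',
                Or.inr (Or.inr ⟨hr4, by omega⟩)⟩)⟩⟩
            · have hr2' : r₀ = 2 := by obtain ⟨m, hm⟩ := hevr; omega
              by_cases hEv : ∃ e, s e ≠ 0 ∧ Even (s e)
              · obtain ⟨e, he0, heE⟩ := hEv
                have hei : e ≠ i := fun h => he0 (by rw [h, hsi])
                have hej : e ≠ j := fun h => he0 (by rw [h, hsj])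
                refine ⟨j, ⟨by rw [hS2]; omega, Or.inr (Or.inl ⟨_, hpz, hZodd',
                  Or.inl ⟨hr2', fun _ => ⟨e, ?_, ?_⟩⟩⟩)⟩⟩
                · rw [htk e hei hej]; exact he0
                · rw [htk e hei hej]; exact heE
              · -- no even stack : all stacks ones; double up on i
                have hall : ∀ a, s a ≤ 1 := by
                  intro a
                  by_contra hgt
                  push_neg at hgt
                  have ha0 : s a ≠ 0 := by omega
                  have ha3 : 3 ≤ s a := by
                    rcases Nat.even_or_odd (s a) with hE | hO
                    · exact absurd ⟨a, ha0, hE⟩ hEv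
                    · obtain ⟨m, hm⟩ := hO; omega
                  have hfa := (hp a).2.1
                  have hfane : f a ≠ a := hp.ne_of_nonzero ha0
                  have hlb := S_lb_two s a (f a) (fun hh => hfane hh.symm) ha0
                    (by rw [hfa]; exact ha0)
                  omega
                subst hr2'
                exact ⟨i, enterB hp hsi hall (by omega) (by omega)⟩
    · -- player 1 moved on a nonzero stack : mirror on the partner
      have hfi : f i ≠ i := hp.ne_of_nonzero hsi
      have hif : i ≠ f i := fun h => hfi h.symm
      have hufi : u (f i) = s i := by rw [huk _ hfi, (hp i).2.1]
      have hti : Function.update u (f i) (u (f i) + 1) i = s i + 1 := by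
        rw [Function.update_of_ne hif, hui]
      have htfi : Function.update u (f i) (u (f i) + 1) (f i) = s i + 1 := by
        rw [Function.update_self, hufi]
      have htk : ∀ k, k ≠ i → k ≠ f i → Function.update u (f i) (u (f i) + 1) k = s k := by
        intro k h1 h2
        rw [Function.update_of_ne h2, huk k h1]
      have hpm := hp.mirror hsi hti htfi htk
      have hZt : Z (Function.update u (f i) (u (f i) + 1)) = Z s := by
        refine Z_congr ?_
        intro k
        by_cases h1 : k = i
        · rw [h1, hti]; omega
        by_cases h2 : k = f i
        · rw [h2, htfi, (hp i).2.1]; omega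
        · rw [htk k h1 h2]
      by_cases hr0 : r₀ = 0
      · exact ⟨f i, ⟨by rw [hS2]; omega, Or.inl ⟨hr0, fx_zero_of_pairing hpm⟩⟩⟩
      · rcases hcond with ⟨h2', _⟩ | ⟨_, hev, hZ3⟩ | ⟨h4', hZ1'⟩
        · omega
        · have hevr : Even r₀ := by obtain ⟨m, hm⟩ := hev; exact ⟨m - 1, by omega⟩
          obtain ⟨m₀, hm₀⟩ := id hevr
          refine ⟨f i, ⟨by rw [hS2]; omega, Or.inr (Or.inl ⟨f, hpm,
            by rw [hZt]; exact hodd, Or.inr (Or.inl ⟨by omega, hevr, by rw [hZt]; omega⟩)⟩)⟩⟩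
        · -- r₀ = 2, single zero : everything is a 1, mirror creates a 2
          have hZNZ := Z_NZ s
          have hSlb := card_NZ_le_S s
          have hall : ∀ a, s a ≤ 1 := all_le_one s (by omega)
          have hsi1 : s i = 1 := by have := hall i; omega
          refine ⟨f i, ⟨by rw [hS2]; omega, Or.inr (Or.inl ⟨f, hpm,
            by rw [hZt]; exact hodd, Or.inl ⟨by omega, fun _ => ⟨i, ?_, ?_⟩⟩⟩)⟩⟩
          · rw [hti]; omega
          · rw [hti, hsi1]; exact ⟨1, rfl⟩
  · -- B branch : the position is ones plus a single 2 (plus zeros)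
    have hr0 : r₀ = 0 := by omega
    have hfxs : fx s = 2 := by
      have hs' : Function.update (Function.update s i₀ 0) i₀ 2 = s := by
        funext k
        by_cases hk : k = i₀
        · rw [hk, Function.update_self, hi₀2]
        · rw [Function.update_of_ne hk, Function.update_of_ne hk]
      calc fx s = fx (Function.update (Function.update s i₀ 0) i₀ 2) := by rw [hs']
        _ = fx (Function.update s i₀ 0) ^^^ (Function.update s i₀ 0) i₀ ^^^ 2 :=
            fx_update _ _ _
        _ = 2 := by rw [fx_zero_of_pairing hg, Function.update_self]; decide
    have hfxu : fx u = fx s ^^^ s i ^^^ (s i + 1) := by rw [hu]; exact fx_update _ _ _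
    by_cases hii : i = i₀
    · -- the 2 was raised to a 3 : answer on a 1
      have hk₁i : k₁ ≠ i := by intro hh; rw [hh, hii, hi₀2] at hk₁; omega
      refine ⟨k₁, ⟨by rw [hS2]; omega, Or.inl ⟨hr0, ?_⟩⟩⟩
      rw [fx_update, hfxu, hfxs, huk k₁ hk₁i, hk₁, hii, hi₀2]
      decide
    · have hsile : s i ≤ 1 := hle1 i hii
      by_cases hs1 : s i = 1
      · -- a 1 was raised to a 2 : raise the 2 to a 3
        have hi₀i : i₀ ≠ i := fun hh => hii hh.symm
        refine ⟨i₀, ⟨by rw [hS2]; omega, Or.inl ⟨hr0, ?_⟩⟩⟩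
        rw [fx_update, hfxu, hfxs, huk i₀ hi₀i, hi₀2, hs1]
        decide
      · -- an empty stack received a token : double up on it
        have hs0 : s i = 0 := by omega
        refine ⟨i, ⟨by rw [hS2]; omega, Or.inl ⟨hr0, ?_⟩⟩⟩
        rw [fx_update, hfxu, hfxs, hui, hs0]
        decide

lemma not_win_of_good (hl5 : 5 ≤ ℓ) : ∀ r (s : Fin ℓ → ℕ), GOOD s r → ¬ BNwins s r := by
  intro r
  induction r using Nat.strong_induction_on with
  | _ r ih =>
    match r with
    | 0 =>
        intro s hg hw
        obtain ⟨_, hc⟩ := hg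
        rcases hc with ⟨_, hfx⟩ | ⟨f, _, _, hcond⟩ | ⟨h2, _⟩
        · exact hw hfx
        · rcases hcond with ⟨h, _⟩ | ⟨h, _⟩ | ⟨h, _⟩ <;> omega
        · omega
    | 1 =>
        intro s hg _
        obtain ⟨_, hc⟩ := hg
        rcases hc with ⟨h, _⟩ | ⟨f, _, _, hcond⟩ | ⟨h, _⟩
        · omega
        · rcases hcond with ⟨h, _⟩ | ⟨_, hev, _⟩ | ⟨h, _⟩
          · omega
          · obtain ⟨m, hm⟩ := hev; omega
          · omega
        · omega
    | (r₀+2) =>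
        intro s hg hw
        simp only [BNwins] at hw
        obtain ⟨i, hi⟩ := hw
        apply hi
        obtain ⟨j, hgt⟩ := closure hl5 s r₀ hg i
        exact ⟨j, ih r₀ (by omega) _ hgt⟩

end BNaux

/-- If `ℓ > 3` is odd and `n ≤ ℓ + 3` is even, the second player wins `BN(n, ℓ)`. -/
theorem second_player_wins_small_n (ℓ n : ℕ) (hℓodd : Odd ℓ) (hℓ : 3 < ℓ)
    (hn : Even n) (hnℓ : n ≤ ℓ + 3) :
    ¬ BNwins (fun _ : Fin ℓ => 0) n := by
  have hl5 : 5 ≤ ℓ := by obtain ⟨m, hm⟩ := hℓodd; omega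
  apply BNaux.not_win_of_good hl5
  have hS0 : BNaux.S (fun _ : Fin ℓ => 0) = 0 := by simp [BNaux.S]
  have hZ0 : BNaux.Z (fun _ : Fin ℓ => 0) = ℓ := by simp [BNaux.Z]
  have hpid : BNaux.Pairing (fun _ : Fin ℓ => 0) id := fun i => ⟨rfl, rfl, by simp⟩
  refine ⟨by rw [hS0]; omega, ?_⟩
  rcases Nat.eq_zero_or_pos n with rfl | hn0
  · exact Or.inl ⟨rfl, BNaux.fx_zero_of_pairing hpid⟩
  · have hn2 : 2 ≤ n := by obtain ⟨m, hm⟩ := hn; omega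
    refine Or.inr (Or.inl ⟨id, hpid, by rw [hZ0]; exact hℓodd,
      Or.inr (Or.inl ⟨hn2, hn, by rw [hZ0]; omega⟩)⟩)
end

section
/- For every natural number n, the first player wins Building Nim BN(2n,5) if and only if n ≥ 5; formally, BNwins (fun _ : Fin 5 => 0) (2*n) ↔ n ≥ 5. -/
/-!
Replacing the final condition "Nim-sum ≠ 0" by the stronger "Nim-sum ≢ 0 (mod 16)" can only hurt
the first player, and changes nothing while every stack stays below 16, which is the case for
`n < 5`. The modified game only sees the heights modulo 16, so its states are 20-bit numbers. For
each number `k` of rounds, the set of states from which the player to move wins the modified game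
with `2k` tokens left is a `2^20`-bit natural number `winMask k`; one round is a few shifts and
masks per stack, which the kernel evaluates with GMP arithmetic. These sets coincide for `k = 7`
and `k = 8`, hence are constant from `k = 7` on, and the empty position is winning exactly for
`k ≥ 5`.
-/

namespace BuildingNim

section General

variable {ℓ : ℕ}

def nimSum (s : Fin ℓ → ℕ) : ℕ := Finset.univ.fold (fun x y : ℕ => x ^^^ y) 0 s

def addToken (s : Fin ℓ → ℕ) (i : Fin ℓ) : Fin ℓ → ℕ := Function.update s i (s i + 1)

def WinsWith (goal : (Fin ℓ → ℕ) → Prop) : (Fin ℓ → ℕ) → ℕ → Prop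
  | s, 0 => goal s
  | s, r + 1 => ∃ i, ¬ WinsWith goal (addToken s i) r

theorem bnwins_iff_winsWith (s : Fin ℓ → ℕ) (r : ℕ) :
    BNwins s r ↔ WinsWith (fun t => nimSum t ≠ 0) s r := by
  induction r generalizing s with
  | zero => rfl
  | succ r ih => simp only [BNwins, WinsWith, addToken, ih]

variable {P Q : (Fin ℓ → ℕ) → Prop}

theorem winsWith_add_two {s : Fin ℓ → ℕ} {r : ℕ} :
    WinsWith P s (r + 2) ↔ ∃ i, ∀ j, WinsWith P (addToken (addToken s i) j) r := by
  simp only [WinsWith, not_exists, not_not]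

theorem WinsWith.mono (hPQ : ∀ t, P t → Q t) {k : ℕ} {s : Fin ℓ → ℕ}
    (h : WinsWith P s (2 * k)) : WinsWith Q s (2 * k) := by
  induction k generalizing s with
  | zero => exact hPQ s h
  | succ k ih =>
    obtain ⟨i, hi⟩ := winsWith_add_two.1 h
    exact winsWith_add_two.2 ⟨i, fun j => ih (hi j)⟩

theorem addToken_le (s : Fin ℓ → ℕ) (i j : Fin ℓ) : addToken s i j ≤ s j + 1 := by
  unfold addToken
  rcases eq_or_ne j i with rfl | h <;> simp [Function.update_of_ne, *]

theorem winsWith_congr {B r : ℕ} {s : Fin ℓ → ℕ}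
    (hPQ : ∀ t, (∀ i, t i < B) → (P t ↔ Q t)) (hs : ∀ i, s i + r < B) :
    WinsWith P s r ↔ WinsWith Q s r := by
  induction r generalizing s with
  | zero => exact hPQ s fun i => by simpa using hs i
  | succ r ih =>
    refine exists_congr fun i => not_congr (ih fun j => ?_)
    have := addToken_le s i j
    have := hs j
    omega

theorem nimSum_mod_two_pow (s : Fin ℓ → ℕ) (w : ℕ) :
    nimSum s % 2 ^ w = nimSum fun i => s i % 2 ^ w := by
  unfold nimSum
  rw [← Finset.fold_hom (m := (· % 2 ^ w)) fun x y => Nat.xor_mod_two_pow, Nat.zero_mod]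

theorem nimSum_mod_two_pow_of_lt {s : Fin ℓ → ℕ} {w : ℕ} (hs : ∀ i, s i < 2 ^ w) :
    nimSum s % 2 ^ w = nimSum s := by
  simp only [nimSum_mod_two_pow, Nat.mod_eq_of_lt (hs _)]

end General

def digit (m i : ℕ) : ℕ := m / 2 ^ (4 * i) % 16

def incrDigit (m i : ℕ) : ℕ := if digit m i = 15 then m - 15 * 2 ^ (4 * i) else m + 2 ^ (4 * i)

def encode (s : Fin 5 → ℕ) : ℕ := ∑ i, s i % 16 * 2 ^ (4 * (i : ℕ))

theorem encode_lt (s : Fin 5 → ℕ) : encode s < 2 ^ 20 := by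
  simp only [encode, Fin.sum_univ_five]
  norm_num
  omega

theorem digit_encode (s : Fin 5 → ℕ) (i : Fin 5) : digit (encode s) i = s i % 16 := by
  fin_cases i <;> simp [digit, encode, Fin.sum_univ_five] <;> omega

theorem encode_addToken (s : Fin 5 → ℕ) (i : Fin 5) :
    encode (addToken s i) = incrDigit (encode s) i := by
  fin_cases i <;>
    simp [incrDigit, digit, encode, addToken, Fin.sum_univ_five, Function.update_apply] <;>
    split_ifs <;> omega

theorem incrDigit_lt {m i : ℕ} (hi : i < 5) (hm : m < 2 ^ 20) : incrDigit m i < 2 ^ 20 := by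
  unfold incrDigit digit
  interval_cases i <;> norm_num <;> split_ifs <;> omega

/-- Built by doubling, so that the kernel evaluates it in `e` steps. -/
def tile (pat w : ℕ) : ℕ → ℕ
  | 0 => pat
  | e + 1 => tile (pat ||| pat <<< w) (2 * w) e

theorem testBit_lor_shiftLeft_self {pat w x : ℕ} (hpat : pat < 2 ^ w) (hx : x < 2 * w) :
    (pat ||| pat <<< w).testBit x = pat.testBit (x % w) := by
  rw [Nat.testBit_lor, Nat.testBit_shiftLeft]
  rcases lt_or_ge x w with h | h
  · simp [Nat.mod_eq_of_lt h, h]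
  · rw [Nat.testBit_lt_two_pow (hpat.trans_le (Nat.pow_le_pow_right two_pos h)),
      Nat.mod_eq_sub_mod h, Nat.mod_eq_of_lt (by omega)]
    simp [h]

theorem lor_shiftLeft_self_lt {pat w : ℕ} (hpat : pat < 2 ^ w) :
    pat ||| pat <<< w < 2 ^ (2 * w) := by
  refine Nat.or_lt_two_pow (hpat.trans_le (Nat.pow_le_pow_right two_pos (by omega))) ?_
  rw [Nat.shiftLeft_eq, two_mul, pow_add]
  exact Nat.mul_lt_mul_of_pos_right hpat (by positivity)

theorem testBit_tile {pat w : ℕ} (hw : 0 < w) (hpat : pat < 2 ^ w) (e m : ℕ) :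
    (tile pat w e).testBit m = (decide (m < 2 ^ e * w) && pat.testBit (m % w)) := by
  induction e generalizing pat w with
  | zero =>
    rcases lt_or_ge m w with hm | hm
    · simp [tile, Nat.mod_eq_of_lt hm, hm]
    · simp [tile, Nat.testBit_lt_two_pow (hpat.trans_le (Nat.pow_le_pow_right two_pos hm)),
        hm.not_gt]
  | succ e ih =>
    rw [tile, ih (by omega) (lor_shiftLeft_self_lt hpat),
      testBit_lor_shiftLeft_self hpat (Nat.mod_lt _ (by omega)),
      Nat.mod_mod_of_dvd _ (dvd_mul_left w 2), pow_succ, mul_assoc]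

def bitInterval (lo hi : ℕ) : ℕ := (2 ^ (hi - lo) - 1) <<< lo

theorem testBit_bitInterval (lo hi x : ℕ) :
    (bitInterval lo hi).testBit x = decide (lo ≤ x ∧ x < hi) := by
  rw [bitInterval, Nat.testBit_shiftLeft, Nat.testBit_two_pow_sub_one]
  by_cases h : lo ≤ x <;> simp [h]
  omega

theorem bitInterval_lt (lo hi : ℕ) : bitInterval lo hi < 2 ^ hi :=
  Nat.lt_pow_two_of_testBit _ fun i hi => by simp [testBit_bitInterval]; omega

def digitRangeMask (p w lo hi : ℕ) : ℕ :=
  tile (bitInterval (lo * 2 ^ p) (hi * 2 ^ p)) (2 ^ (p + w)) (20 - (p + w))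

theorem testBit_digitRangeMask {p w lo hi m : ℕ} (hhi : hi ≤ 2 ^ w) (hpw : p + w ≤ 20)
    (hm : m < 2 ^ 20) :
    (digitRangeMask p w lo hi).testBit m =
      decide (lo ≤ m / 2 ^ p % 2 ^ w ∧ m / 2 ^ p % 2 ^ w < hi) := by
  have hpat : bitInterval (lo * 2 ^ p) (hi * 2 ^ p) < 2 ^ 2 ^ (p + w) := by
    refine (bitInterval_lt _ _).trans_le (Nat.pow_le_pow_right two_pos ?_)
    rw [pow_add, mul_comm]
    exact Nat.mul_le_mul_left _ hhi
  rw [digitRangeMask, testBit_tile (by positivity) hpat, testBit_bitInterval, ← pow_add,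
    Nat.sub_add_cancel hpw, decide_eq_true hm, Bool.true_and, pow_add,
    ← Nat.mod_mul_right_div_self]
  simp only [Nat.le_div_iff_mul_le (Nat.two_pow_pos p), Nat.div_lt_iff_lt_mul (Nat.two_pow_pos p)]

def preIncr (S : ℕ) (i : Fin 5) : ℕ :=
  (S >>> 2 ^ (4 * (i : ℕ)) &&& digitRangeMask (4 * i) 4 0 15) |||
    (S <<< (15 * 2 ^ (4 * (i : ℕ))) &&& digitRangeMask (4 * i) 4 15 16)

theorem testBit_preIncr (S : ℕ) (i : Fin 5) {m : ℕ} (hm : m < 2 ^ 20) :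
    (preIncr S i).testBit m = S.testBit (incrDigit m i) := by
  have hmask {lo hi : ℕ} (hhi : hi ≤ 16) :
      (digitRangeMask (4 * (i : ℕ)) 4 lo hi).testBit m =
        (decide (lo ≤ digit m i) && decide (digit m i < hi)) := by
    rw [testBit_digitRangeMask hhi (by omega) hm, Bool.decide_and]
    rfl
  rw [preIncr, incrDigit, Nat.testBit_lor, Nat.testBit_land, Nat.testBit_land,
    hmask (by norm_num), hmask le_rfl, Nat.testBit_shiftRight, Nat.testBit_shiftLeft]
  by_cases h : digit m i = 15
  · have h15 : 15 * 2 ^ (4 * (i : ℕ)) ≤ m :=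
      (Nat.le_div_iff_mul_le (Nat.two_pow_pos _)).1 (h ▸ Nat.mod_le _ _)
    simp [h, h15]
  · have : digit m i < 15 := (Nat.lt_succ_iff.1 (Nat.mod_lt _ (by norm_num))).lt_of_ne h
    simp [h, this, Nat.add_comm]

def preAll (S : ℕ) : ℕ :=
  preIncr S 0 &&& preIncr S 1 &&& preIncr S 2 &&& preIncr S 3 &&& preIncr S 4

def preAny (S : ℕ) : ℕ :=
  preIncr S 0 ||| preIncr S 1 ||| preIncr S 2 ||| preIncr S 3 ||| preIncr S 4

theorem testBit_preAll (S : ℕ) {m : ℕ} (hm : m < 2 ^ 20) :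
    (preAll S).testBit m = true ↔ ∀ i : Fin 5, S.testBit (incrDigit m i) = true := by
  simp [preAll, testBit_preIncr _ _ hm, Fin.forall_fin_succ, and_assoc]

theorem testBit_preAny (S : ℕ) {m : ℕ} (hm : m < 2 ^ 20) :
    (preAny S).testBit m = true ↔ ∃ i : Fin 5, S.testBit (incrDigit m i) = true := by
  simp [preAny, testBit_preIncr _ _ hm, Fin.exists_fin_succ, or_assoc]

def preRound (S : ℕ) : ℕ := preAny (preAll S)

theorem testBit_preRound (S : ℕ) {m : ℕ} (hm : m < 2 ^ 20) :
    (preRound S).testBit m = true ↔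
      ∃ i : Fin 5, ∀ j : Fin 5, S.testBit (incrDigit (incrDigit m i) j) = true := by
  simp only [preRound, testBit_preAny _ hm, testBit_preAll _ (incrDigit_lt (Fin.isLt _) hm)]

def bitMask (t : ℕ) : ℕ := digitRangeMask t 1 1 2

theorem testBit_bitMask {t m : ℕ} (ht : t < 20) (hm : m < 2 ^ 20) :
    (bitMask t).testBit m = m.testBit t := by
  rw [bitMask, testBit_digitRangeMask (by norm_num) (by omega) hm,
    Nat.testBit_eq_decide_div_mod_eq]
  simp only [decide_eq_decide]
  omega

def digitXor (m : ℕ) : ℕ := nimSum fun i : Fin 5 => digit m i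

theorem testBit_digit {b : ℕ} (hb : b < 4) (m i : ℕ) :
    (digit m i).testBit b = m.testBit (4 * i + b) := by
  rw [digit, show (16 : ℕ) = 2 ^ 4 from rfl, Nat.testBit_mod_two_pow, Nat.testBit_div_two_pow]
  simp [hb, Nat.add_comm]

def parityMask (b : ℕ) : ℕ :=
  bitMask b ^^^ bitMask (4 + b) ^^^ bitMask (8 + b) ^^^ bitMask (12 + b) ^^^ bitMask (16 + b)

theorem testBit_parityMask {b m : ℕ} (hb : b < 4) (hm : m < 2 ^ 20) :
    (parityMask b).testBit m = (digitXor m).testBit b := by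
  have hxor : digitXor m =
      digit m 0 ^^^ (digit m 1 ^^^ (digit m 2 ^^^ (digit m 3 ^^^ (digit m 4 ^^^ 0)))) := rfl
  rw [parityMask, hxor]
  simp only [Nat.testBit_xor, testBit_digit hb, testBit_bitMask (t := b) (by omega) hm,
    testBit_bitMask (t := 4 + b) (by omega) hm, testBit_bitMask (t := 8 + b) (by omega) hm,
    testBit_bitMask (t := 12 + b) (by omega) hm, testBit_bitMask (t := 16 + b) (by omega) hm]
  simp

def initialMask : ℕ := parityMask 0 ||| parityMask 1 ||| parityMask 2 ||| parityMask 3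

theorem digitXor_lt (m : ℕ) : digitXor m < 16 := by
  have h : digitXor m % 2 ^ 4 = digitXor m := by
    rw [digitXor, nimSum_mod_two_pow]
    simp only [digit, show (2 : ℕ) ^ 4 = 16 from rfl, Nat.mod_mod]
  exact h ▸ Nat.mod_lt _ (by norm_num)

theorem testBit_initialMask {m : ℕ} (hm : m < 2 ^ 20) :
    initialMask.testBit m = true ↔ digitXor m ≠ 0 := by
  simp only [initialMask, Nat.testBit_lor, testBit_parityMask (b := 0) (by norm_num) hm,
    testBit_parityMask (b := 1) (by norm_num) hm, testBit_parityMask (b := 2) (by norm_num) hm,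
    testBit_parityMask (b := 3) (by norm_num) hm, Bool.or_eq_true]
  constructor
  · rintro h hz
    simp [hz] at h
  · intro h
    obtain ⟨b, hb⟩ := Nat.exists_testBit_of_ne_zero h
    have : b < 4 := by
      by_contra! h4
      have := Nat.testBit_lt_two_pow ((digitXor_lt m).trans_le (Nat.pow_le_pow_right two_pos h4))
      simp_all
    interval_cases b <;> simp [hb]

theorem digitXor_encode (s : Fin 5 → ℕ) : digitXor (encode s) = nimSum s % 16 := by
  rw [show (16 : ℕ) = 2 ^ 4 from rfl, nimSum_mod_two_pow]
  simp only [digitXor, digit_encode]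
  rfl

def winMask : ℕ → ℕ
  | 0 => initialMask
  | k + 1 => preRound (winMask k)

theorem testBit_winMask_encode (k : ℕ) (s : Fin 5 → ℕ) :
    (winMask k).testBit (encode s) = true ↔
      WinsWith (fun t => nimSum t % 16 ≠ 0) s (2 * k) := by
  induction k generalizing s with
  | zero => rw [winMask, testBit_initialMask (encode_lt s), digitXor_encode]; rfl
  | succ k ih =>
    rw [winMask, testBit_preRound _ (encode_lt s), Nat.mul_succ, winsWith_add_two]
    simp only [← encode_addToken, ih]

theorem winMask_eight : winMask 8 = winMask 7 := by decide +kernel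

theorem winMask_of_ge {k : ℕ} (hk : 7 ≤ k) : winMask k = winMask 7 := by
  induction k, hk using Nat.le_induction with
  | base => rfl
  | succ k _ ih => rw [winMask, ih, ← winMask, winMask_eight]

theorem testBit_winMask_lt_eight : ∀ k < 8, (winMask k).testBit 0 = decide (5 ≤ k) := by
  decide +kernel

theorem testBit_winMask_zero (k : ℕ) : (winMask k).testBit 0 = decide (5 ≤ k) := by
  rcases lt_or_ge k 8 with hk | hk
  · exact testBit_winMask_lt_eight k hk
  · rw [winMask_of_ge (by omega), testBit_winMask_lt_eight 7 (by norm_num)]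
    simp [show 5 ≤ k by omega]

end BuildingNim

open BuildingNim

/-- The first player wins `BN(2n, 5)` iff `n ≥ 5`. -/
theorem first_player_wins_five_stacks_iff (n : ℕ) :
    BNwins (fun _ : Fin 5 => 0) (2 * n) ↔ n ≥ 5 := by
  have hmod : WinsWith (fun t => nimSum t % 16 ≠ 0) (fun _ : Fin 5 => 0) (2 * n) ↔ n ≥ 5 := by
    rw [← testBit_winMask_encode, show encode (fun _ => 0) = 0 from rfl, testBit_winMask_zero,
      decide_eq_true_iff]
  rw [bnwins_iff_winsWith]
  by_cases hn : n < 5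
  · refine (winsWith_congr (B := 16) (fun t ht => ?_) fun _ => by omega).trans hmod
    rw [show nimSum t % 16 = nimSum t from nimSum_mod_two_pow_of_lt (w := 4) ht]
  · refine ⟨fun _ => by omega, fun h => (hmod.2 (by omega)).mono fun t ht h0 => ?_⟩
    simp [h0] at ht
end

section
/- Strategy I maintenance step (three stacks): for all natural numbers x ≤ y, if m is any multiset obtained from the multiset {y, x, x} by adding 1 to one of its elements (i.e., m = ({y,x,x}.erase a) + {a+1} for some a ∈ {y,x,x}), then there exist an element b ∈ m and natural numbers x' ≤ y' such that (m.erase b) + {b+1} = {y', x', x'} as multisets. -/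
lemma msw (u v w : ℕ) : (u ::ₘ v ::ₘ {w} : Multiset ℕ) = v ::ₘ u ::ₘ {w} :=
  Multiset.cons_swap u v {w}

lemma ms_add (u v w : ℕ) : (u ::ₘ {v} : Multiset ℕ) + {w} = w ::ₘ u ::ₘ {v} := by
  rw [_root_.add_comm]; rfl

/-- Strategy I maintenance step on three stacks: from a position of the form
`(y, x, x)` with `x ≤ y`, after the opponent increments any one stack, the
player can increment a stack so as to restore a position of the form
`(y', x', x')` with `x' ≤ y'`. -/
theorem strategyI_step (x y : ℕ) (hxy : x ≤ y) (a : ℕ)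
    (ha : a ∈ ({y, x, x} : Multiset ℕ)) (m : Multiset ℕ)
    (hm : m = ({y, x, x} : Multiset ℕ).erase a + {a + 1}) :
    ∃ b ∈ m, ∃ x' y' : ℕ, x' ≤ y' ∧
      m.erase b + {b + 1} = ({y', x', x'} : Multiset ℕ) := by
  have ha' : a = y ∨ a = x := by simpa using ha
  by_cases hay : a = y
  · -- opponent incremented the big stack (or x = y): m = {a+1, x, x}
    have hm' : m = (a + 1) ::ₘ x ::ₘ {x} := by
      rw [hm, hay]
      show ((y ::ₘ x ::ₘ {x} : Multiset ℕ).erase y + {y + 1}) = _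
      rw [Multiset.erase_cons_head, ← hay, ms_add]
    refine ⟨a + 1, by simp [hm'], x, a + 2, by omega, ?_⟩
    rw [hm', Multiset.erase_cons_head]
    show x ::ₘ {x} + {a + 1 + 1} = (a + 2) ::ₘ x ::ₘ {x}
    rw [ms_add]
  · -- a = x and x ≠ y, so x < y: m = {y, x+1, x}, respond on the other x
    have hax : a = x := by tauto
    have hne : y ≠ a := fun h => hay h.symm
    have hm' : m = a ::ₘ y ::ₘ {a + 1} := by
      rw [hm, hax]
      show ((y ::ₘ x ::ₘ {x} : Multiset ℕ).erase x + {x + 1}) = _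
      rw [Multiset.erase_cons_tail _ (hax ▸ hne), Multiset.erase_cons_head, ← hax,
        Multiset.cons_add, Multiset.singleton_add, msw]
    have hlt : a < y := lt_of_le_of_ne (hax ▸ hxy) (fun h => hne h.symm)
    refine ⟨a, by simp [hm'], a + 1, y, by omega, ?_⟩
    rw [hm', Multiset.erase_cons_head]
    show y ::ₘ {a + 1} + {a + 1} = y ::ₘ (a + 1) ::ₘ {a + 1}
    rw [ms_add, msw]
end

section
/- Strategy II maintenance step (three stacks): for all natural numbers x and y, if m is any multiset obtained from the multiset {x+y, x, y} by adding 1 to one of its elements (i.e., m = ({x+y,x,y}.erase a) + {a+1} for some a ∈ {x+y,x,y}), then there exist an element b ∈ m and natural numbers x', y' such that (m.erase b) + {b+1} = {x'+y', x', y'} as multisets. -/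
private lemma swap12 (a b c : ℕ) : ({a, b, c} : Multiset ℕ) = {b, a, c} :=
  Multiset.cons_swap a b {c}

private lemma swap23 (a b c : ℕ) : ({a, b, c} : Multiset ℕ) = {a, c, b} :=
  congrArg (a ::ₘ ·) (Multiset.cons_swap b c 0)

/-- Strategy II maintenance step on three stacks: from a position of the form
`(x + y, x, y)`, after the opponent increments any one stack, the player can
increment a stack so as to restore a position of the form `(x' + y', x', y')`. -/
theorem strategyII_step (x y : ℕ) (a : ℕ)
    (ha : a ∈ ({x + y, x, y} : Multiset ℕ)) (m : Multiset ℕ)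
    (hm : m = ({x + y, x, y} : Multiset ℕ).erase a + {a + 1}) :
    ∃ b ∈ m, ∃ x' y' : ℕ,
      m.erase b + {b + 1} = ({x' + y', x', y'} : Multiset ℕ) := by
  simp only [Multiset.insert_eq_cons, Multiset.mem_cons, Multiset.mem_singleton] at ha
  rcases ha with h | h | h
  · -- a = x + y : m = {x, y, x+y+1}, respond on x
    rw [h] at hm; simp only [Multiset.insert_eq_cons] at hm; rw [Multiset.erase_cons_head] at hm
    have hmv : m = x ::ₘ y ::ₘ {x + y + 1} := hm
    refine ⟨x, by simp [hmv], x + 1, y, ?_⟩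
    rw [hmv, Multiset.erase_cons_head]
    show ({y, x + y + 1, x + 1} : Multiset ℕ) = {x + 1 + y, x + 1, y}
    rw [show x + y + 1 = x + 1 + y by ring, swap12, swap23]
  · -- a = x : m = {x+y, y, x+1}, respond on x+y
    rw [h, show ({x + y, x, y} : Multiset ℕ) = {x, x + y, y} from swap12 ..] at hm; simp only [Multiset.insert_eq_cons] at hm; rw [Multiset.erase_cons_head] at hm
    have hmv : m = (x + y) ::ₘ y ::ₘ {x + 1} := hm
    refine ⟨x + y, by simp [hmv], x + 1, y, ?_⟩
    rw [hmv, Multiset.erase_cons_head]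
    show ({y, x + 1, x + y + 1} : Multiset ℕ) = {x + 1 + y, x + 1, y}
    rw [show x + y + 1 = x + 1 + y by ring, swap23, swap12, swap23]
  · -- a = y : m = {x+y, x, y+1}, respond on x+y
    rw [h, show ({x + y, x, y} : Multiset ℕ) = {y, x + y, x} by
          rw [swap23, swap12]] at hm; simp only [Multiset.insert_eq_cons] at hm; rw [Multiset.erase_cons_head] at hm
    have hmv : m = (x + y) ::ₘ x ::ₘ {y + 1} := hm
    refine ⟨x + y, by simp [hmv], x, y + 1, ?_⟩
    rw [hmv, Multiset.erase_cons_head]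
    show ({x, y + 1, x + y + 1} : Multiset ℕ) = {x + (y + 1), x, y + 1}
    rw [show x + y + 1 = x + (y + 1) by ring, swap23, swap12]
end

section
/- For every natural number y ≥ 1: there exists k ≥ 1 with y = 2^k − 1 if and only if for all x with 0 ≤ x ≤ y one has x ^^^ (y − x) = y. -/
/-!
By cancellation, `x ^^^ (y - x) = y` says exactly that `y - x = x ^^^ y`. If `y = 2 ^ k - 1`,
then `x ^^^ y` is the bitwise complement of `x` below `k`, which is disjoint from `x`, so
`x + (x ^^^ y) = x ^^^ (x ^^^ y) = y`. Conversely, if some bit `2 ^ i ≤ y` of `y` is zero, then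
`2 ^ i ^^^ y = y + 2 ^ i`, which cannot equal `y - 2 ^ i`; so every bit of `y` below its binary
length is set.
-/

namespace Nat

theorem add_eq_xor_add_two_mul_and (a b : ℕ) : a + b = (a ^^^ b) + 2 * (a &&& b) := by
  induction a using Nat.binaryRec generalizing b with
  | zero => simp
  | bit p m ih =>
    induction b using Nat.binaryRec with
    | zero => simp
    | bit q n _ =>
      rw [xor_bit, land_bit, bit_val, bit_val, bit_val, bit_val]
      have := ih n
      cases p <;> cases q <;> simp [Bool.toNat] <;> omega

theorem xor_eq_add_of_and_eq_zero {a b : ℕ} (h : a &&& b = 0) : a ^^^ b = a + b := by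
  simpa [h] using (add_eq_xor_add_two_mul_and a b).symm

theorem two_pow_sub_one_sub_eq_xor {k x : ℕ} (hx : x < 2 ^ k) :
    2 ^ k - 1 - x = x ^^^ (2 ^ k - 1) := by
  have hdisj : x &&& (x ^^^ (2 ^ k - 1)) = 0 := by
    rw [and_xor_distrib_left, Nat.and_self, and_two_pow_sub_one_of_lt_two_pow hx, Nat.xor_self]
  have hsum := xor_eq_add_of_and_eq_zero hdisj
  rw [xor_cancel_left] at hsum
  omega

theorem eq_two_pow_size_sub_one_of_testBit {y : ℕ} (h : ∀ i < size y, y.testBit i = true) :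
    y = 2 ^ size y - 1 := by
  refine eq_of_testBit_eq fun i => ?_
  rw [testBit_two_pow_sub_one]
  rcases lt_or_ge i (size y) with hi | hi
  · simp [h i hi, hi]
  · simp [testBit_lt_two_pow ((lt_size_self y).trans_le (Nat.pow_le_pow_right two_pos hi)),
      Nat.not_lt.mpr hi]

theorem testBit_of_two_pow_xor_sub_eq {y i : ℕ} (hi : 2 ^ i ≤ y)
    (h : 2 ^ i ^^^ (y - 2 ^ i) = y) : y.testBit i = true := by
  by_contra hbit
  rw [Bool.not_eq_true] at hbit
  have hdisj : 2 ^ i &&& y = 0 := by simp [two_pow_and, hbit]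
  rw [xor_eq_iff_right_eq, xor_eq_add_of_and_eq_zero hdisj] at h
  have := Nat.two_pow_pos i
  omega

end Nat

/-- (NS5): for `y ≥ 1`, `y = 2 ^ k - 1` for some `k ≥ 1` iff
`x ^^^ (y - x) = y` for every `0 ≤ x ≤ y`. -/
theorem pow_sub_one_iff_nimSum_split (y : ℕ) (hy : 1 ≤ y) :
    (∃ k ≥ 1, y = 2 ^ k - 1) ↔ ∀ x, x ≤ y → x ^^^ (y - x) = y := by
  constructor
  · rintro ⟨k, -, rfl⟩ x hx
    rw [Nat.two_pow_sub_one_sub_eq_xor (Nat.lt_of_le_sub_one (Nat.two_pow_pos k) hx),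
      xor_cancel_left]
  · intro h
    refine ⟨Nat.size y, Nat.size_pos.mpr hy,
      Nat.eq_two_pow_size_sub_one_of_testBit fun i hi => ?_⟩
    have hle : 2 ^ i ≤ y := Nat.lt_size.mp hi
    exact Nat.testBit_of_two_pow_xor_sub_eq hle (h _ hle)
end

section
/- If the Nim-sum of a list s of natural numbers is not equal to 2^h − 1 for any integer h ≥ 1, then incrementing any single entry of s by 1 produces a list with nonzero Nim-sum; formally, for every list s and every index i < s.length, if (¬ ∃ h ≥ 1, nimSum s = 2^h − 1), then nimSum (s.set i (s.get i + 1)) ≠ 0. -/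
/-!
Incrementing an entry `x` changes the Nim-sum by `x ^^^ (x + 1)`, so the new Nim-sum vanishes
exactly when the old one equals `x ^^^ (x + 1)`. But adding one to `x` flips precisely its
trailing ones and the zero bit above them, so `x ^^^ (x + 1)` is always of the form `2 ^ h - 1`.
-/

/-- The Nim-sum of a list of naturals: the XOR of all its entries. -/
def nimSum (l : List ℕ) : ℕ := l.foldr (· ^^^ ·) 0

theorem List.foldr_xor_set {α : Type*} [XorOp α] [Zero α] [LawfulXor α] (s : List α) (i : ℕ)
    (hi : i < s.length) (v : α) :
    (s.set i v).foldr (· ^^^ ·) 0 = s.foldr (· ^^^ ·) 0 ^^^ s[i] ^^^ v := by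
  induction s generalizing i with
  | nil => simp at hi
  | cons a t ih =>
    cases i with
    | zero => simp [xor_comm a, xor_comm v]
    | succ i => simp [ih i (by simpa using hi), xor_assoc]

theorem Nat.exists_xor_succ_eq_two_pow_sub_one (x : ℕ) :
    ∃ h ≥ 1, x ^^^ (x + 1) = 2 ^ h - 1 := by
  induction x using Nat.binaryRec with
  | zero => exact ⟨1, le_rfl, rfl⟩
  | bit b n ih =>
    cases b with
    | false =>
      refine ⟨1, le_rfl, ?_⟩
      rw [show bit false n + 1 = bit true n by simp [bit_val], xor_bit]
      simp [bit_val]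
    | true =>
      obtain ⟨h, hh, hxor⟩ := ih
      refine ⟨h + 1, by omega, ?_⟩
      rw [show bit true n + 1 = bit false (n + 1) by simp [bit_val]; omega, xor_bit, hxor]
      have := Nat.one_le_two_pow (n := h)
      simp only [Bool.bne_false, bit_val, Bool.toNat_true, pow_succ]
      omega

/-- If the Nim-sum of `s` is not of the form `2 ^ h - 1` for any `h ≥ 1`, then
incrementing any single entry of `s` yields a list with nonzero Nim-sum. -/
theorem nimSum_set_ne_zero (s : List ℕ) (i : ℕ) (hi : i < s.length)
    (h : ¬ ∃ h ≥ 1, nimSum s = 2 ^ h - 1) :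
    nimSum (s.set i (s.get ⟨i, hi⟩ + 1)) ≠ 0 := by
  intro hzero
  have hs : nimSum s = s[i] ^^^ (s[i] + 1) := by
    rwa [nimSum, List.foldr_xor_set s i hi, xor_eq_zero_iff, xor_eq_iff_left_eq, Nat.xor_comm,
      List.get_eq_getElem] at hzero
  exact h (hs ▸ Nat.exists_xor_succ_eq_two_pow_sub_one s[i])
end

section
/- Let π = 2^k be a power of 2, let ℓ ≥ 3 be odd, and let x : Fin ℓ → ℕ be stack heights such that the Nim-sum of all x i is nonzero but (x 0 + π) ^^^ (x 1 + π) ^^^ (Nim-sum of x i for i ≥ 2) = 0. Then x 0 + x 1 + ⋯ + x (ℓ−1) ≥ 4π. -/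
/-!
Write `a = x 0`, `b = x 1` and `R` for the Nim-sum of the remaining stacks. The hypotheses say
`R = (a + π) ^^^ (b + π) ≠ a ^^^ b`, and `R` is at most the number of tokens outside the first
two stacks since a Nim-sum never exceeds the ordinary sum. So it suffices that
`a + b + ((a + π) ^^^ (b + π)) ≥ 4π` whenever adding `π` to both `a` and `b` changes `a ^^^ b`.
This is proved by induction on `k`: halving `a` and `b` halves `π` and keeps the parity of both
Nim-sums, and for `π = 1` it is a finite check.
-/

namespace Nat

theorem xor_eq_two_mul_xor_div_two_add_mod_two (a b : ℕ) :
    a ^^^ b = 2 * (a / 2 ^^^ b / 2) + (a + b) % 2 := by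
  have hdiv : (a ^^^ b) / 2 = a / 2 ^^^ b / 2 := xor_div_two
  have hmod : (a ^^^ b) % 2 = (a + b) % 2 := xor_mod_two_eq
  omega

theorem xor_le_add (a b : ℕ) : a ^^^ b ≤ a + b := by
  induction a using Nat.strong_induction_on generalizing b with
  | _ a ih =>
    rcases Nat.eq_zero_or_pos a with rfl | ha
    · simp
    · have := xor_eq_two_mul_xor_div_two_add_mod_two a b
      have := ih (a / 2) (Nat.div_lt_self ha one_lt_two) (b / 2)
      omega

theorem four_le_add_add_xor_add_one {a b : ℕ} (h : a ^^^ b ≠ (a + 1) ^^^ (b + 1)) :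
    4 ≤ a + b + ((a + 1) ^^^ (b + 1)) := by
  by_contra! hlt
  have ha : a < 4 := by omega
  have hb : b < 4 := by omega
  interval_cases a <;> interval_cases b <;> revert h hlt <;> decide

theorem four_mul_two_pow_le_add_add_xor_add_two_pow (k : ℕ) {a b : ℕ}
    (h : a ^^^ b ≠ (a + 2 ^ k) ^^^ (b + 2 ^ k)) :
    4 * 2 ^ k ≤ a + b + ((a + 2 ^ k) ^^^ (b + 2 ^ k)) := by
  induction k generalizing a b with
  | zero => exact four_le_add_add_xor_add_one h
  | succ k ih =>
    have hpow : 2 ^ (k + 1) = 2 * 2 ^ k := by ring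
    have hxor := xor_eq_two_mul_xor_div_two_add_mod_two a b
    have hxor' := xor_eq_two_mul_xor_div_two_add_mod_two (a + 2 ^ (k + 1)) (b + 2 ^ (k + 1))
    rw [show (a + 2 ^ (k + 1)) / 2 = a / 2 + 2 ^ k by omega,
      show (b + 2 ^ (k + 1)) / 2 = b / 2 + 2 ^ k by omega] at hxor'
    have hhalf : a / 2 ^^^ b / 2 ≠ (a / 2 + 2 ^ k) ^^^ (b / 2 + 2 ^ k) := by
      intro heq
      apply h
      rw [hxor, hxor', heq]
      omega
    have := ih hhalf
    omega

end Nat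

theorem Finset.fold_xor_le_sum {α : Type*} [DecidableEq α] (s : Finset α) (f : α → ℕ) :
    s.fold (fun a b : ℕ => a ^^^ b) 0 f ≤ ∑ i ∈ s, f i := by
  induction s using Finset.induction_on with
  | empty => simp
  | insert i s hi ih =>
    rw [Finset.fold_insert hi, Finset.sum_insert hi]
    exact (Nat.xor_le_add _ _).trans (Nat.add_le_add_left ih _)

theorem Fin.univ_eq_insert_zero_insert_one {ℓ : ℕ} (hℓ : 2 ≤ ℓ) :
    (Finset.univ : Finset (Fin ℓ)) =
      insert ⟨0, by omega⟩ (insert ⟨1, by omega⟩ (Finset.univ.filter (2 ≤ ·.val))) := by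
  ext i
  simp only [Finset.mem_univ, Finset.mem_insert, Finset.mem_filter, true_and, true_iff,
    Fin.ext_iff]
  omega

/-- If `π = 2 ^ k` is a power of two, `ℓ ≥ 3` is odd, the Nim-sum of the stack
heights `x 0, …, x (ℓ - 1)` is nonzero, but adding `π` to each of the first two
stacks produces Nim-sum zero, then the total number of tokens is at least `4π`. -/
theorem tokens_ge_four_pi (k ℓ : ℕ) (π : ℕ) (hπ : π = 2 ^ k)
    (hℓ : 3 ≤ ℓ) (x : Fin ℓ → ℕ)
    (hne : Finset.univ.fold (fun a b : ℕ => a ^^^ b) 0 x ≠ 0)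
    (hzero : (x ⟨0, by omega⟩ + π) ^^^ (x ⟨1, by omega⟩ + π) ^^^
      (Finset.univ.filter (fun i : Fin ℓ => 2 ≤ (i : ℕ))).fold
        (fun a b : ℕ => a ^^^ b) 0 x = 0) :
    4 * π ≤ ∑ i, x i := by
  subst hπ
  set s := Finset.univ.filter (fun i : Fin ℓ => 2 ≤ (i : ℕ))
  set R := s.fold (fun a b : ℕ => a ^^^ b) 0 x
  have h1 : (⟨1, by omega⟩ : Fin ℓ) ∉ s := by simp [s]
  have h0 : (⟨0, by omega⟩ : Fin ℓ) ∉ insert ⟨1, by omega⟩ s := by simp [s]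
  rw [Fin.univ_eq_insert_zero_insert_one (by omega), Finset.fold_insert h0,
    Finset.fold_insert h1, ← Nat.xor_assoc] at hne
  rw [Fin.univ_eq_insert_zero_insert_one (by omega), Finset.sum_insert h0, Finset.sum_insert h1]
  have hR : (x ⟨0, by omega⟩ + 2 ^ k) ^^^ (x ⟨1, by omega⟩ + 2 ^ k) = R := xor_eq_zero_iff.mp hzero
  have hchange : x ⟨0, by omega⟩ ^^^ x ⟨1, by omega⟩ ≠
      (x ⟨0, by omega⟩ + 2 ^ k) ^^^ (x ⟨1, by omega⟩ + 2 ^ k) := by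
    rw [hR]
    exact fun heq => hne (xor_eq_zero_iff.mpr heq)
  have hkey := Nat.four_mul_two_pow_le_add_add_xor_add_two_pow k hchange
  have hRle : R ≤ ∑ i ∈ s, x i := s.fold_xor_le_sum x
  omega
end
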